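/- arXiv:1805.07576 — 6 statements merged into one kernel-verified Lean document; each statement's English description precedes it below -/
import Mathlib

section
/- If (A,B) is a Lehman pair of n×n (0,1)-matrices satisfying AB^T = J + kI with k ∈ {-1,1,2,...} and n > 1, then B^T A = A B^T, and there exist integers r and s such that every row and column of A sums to r, every row and column of B sums to s, and rs = n + k. -/
open Matrix BigOperators

/-! Since `(J + kI)((n + k)I - J) = k(n + k)I`, the matrix `A` is nonsingular, and cancelling
`A` from `A (BᵀA) = (J + kI) A` gives `(n + k)(BᵀA - kI) = c dᵀ`, where `c` and `d` are the
column-sum vectors of `B` and `A`. A zero column would make `A` or `B` singular, so `c` and `d`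
are positive and each `c i * d j` is a positive multiple of `n + k`. Taking traces, the diagonal
products `c i * d i` sum to `n (n + k)`, so they all equal `n + k`, and then so do the
off-diagonal ones, because `(c i * d j) (c j * d i) = (c i * d i) (c j * d j)`. Hence
`BᵀA = J + kI`, and `c`, `d` are constant; the row sums follow from `A c = (n + k) 1` and
`B d = (n + k) 1`. -/

/-- A (0,1)-matrix: every entry is 0 or 1. -/
def is01 {m n : Type*} (A : Matrix m n ℤ) : Prop := ∀ i j, A i j = 0 ∨ A i j = 1

theorem eq_of_forall_mul_eq {ι M : Type*} [MonoidWithZero M] [IsLeftCancelMulZero M]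
    {c d : ι → M} {m : M} (hm : m ≠ 0) (hcd : ∀ i j, c i * d j = m) (i j : ι) : d i = d j :=
  mul_left_cancel₀ (left_ne_zero_of_mul (hcd i i ▸ hm)) ((hcd i i).trans (hcd i j).symm)

theorem Int.mul_eq_of_dvd_of_sum_diag_eq {ι : Type*} [Fintype ι] {c d : ι → ℤ} {m : ℤ}
    (hc : ∀ i, 0 < c i) (hd : ∀ j, 0 < d j) (hdvd : ∀ i j, m ∣ c i * d j)
    (hsum : ∑ i, c i * d i = Fintype.card ι * m) (i j : ι) : c i * d j = m := by
  have hle : ∀ i j, m ≤ c i * d j := fun i j => Int.le_of_dvd (mul_pos (hc i) (hd j)) (hdvd i j)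
  have hdiag : ∀ i, c i * d i = m := fun i =>
    ((Finset.sum_eq_sum_iff_of_le (s := .univ) fun i _ => hle i i).mp (by simp [hsum])
      i (Finset.mem_univ i)).symm
  have hm : 0 < m := hdiag i ▸ mul_pos (hc i) (hd i)
  nlinarith [hle i j, hle j i, hdiag i, hdiag j]

namespace Matrix

variable {ι R : Type*} [Fintype ι] [DecidableEq ι]

section CommRing

variable [CommRing R]

theorem of_one_add_smul_one_mul (k : R) :
    (of (fun _ _ => 1) + k • 1 : Matrix ι ι R) * ((Fintype.card ι + k) • 1 - of fun _ _ => 1) =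
      (k * (Fintype.card ι + k)) • 1 := by
  have hJJ : (of fun _ _ => 1 : Matrix ι ι R) * of (fun _ _ => 1) =
      (Fintype.card ι : R) • of fun _ _ => 1 := by
    ext; simp [mul_apply]
  rw [add_mul, mul_sub, mul_sub, hJJ]
  simp only [Matrix.mul_smul, Matrix.smul_mul, mul_one, one_mul]
  module

theorem of_one_add_smul_one_mulVec_one (k : R) :
    (of (fun _ _ => 1) + k • 1 : Matrix ι ι R) *ᵥ 1 = (Fintype.card ι + k) • 1 := by
  ext; simp [mulVec, dotProduct, one_apply, Finset.sum_add_distrib, add_comm]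

omit [Fintype ι] in
theorem transpose_of_one_add_smul_one (k : R) :
    (of (fun _ _ => 1) + k • 1 : Matrix ι ι R)ᵀ = of (fun _ _ => 1) + k • 1 := by
  rw [transpose_add, transpose_smul, transpose_one]; rfl

variable {A B : Matrix ι ι R} {k : R}

theorem mul_transpose_eq_symm (hAB : A * Bᵀ = of (fun _ _ => 1) + k • 1) :
    B * Aᵀ = of (fun _ _ => 1) + k • 1 := by
  rw [← transpose_of_one_add_smul_one, ← hAB, transpose_mul, transpose_transpose]

theorem transpose_mulVec_one_pos_of_nonneg_of_det_ne_zero [LinearOrder R] [IsStrictOrderedRing R]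
    (hA : ∀ i j, 0 ≤ A i j) (hdet : A.det ≠ 0) (j : ι) : 0 < (Aᵀ *ᵥ 1) j := by
  simp only [mulVec, dotProduct, transpose_apply, Pi.one_apply, mul_one]
  refine (Finset.sum_nonneg fun i _ => hA i j).lt_of_ne fun h => hdet ?_
  exact det_eq_zero_of_column_eq_zero j fun i =>
    (Finset.sum_eq_zero_iff_of_nonneg fun i _ => hA i j).mp h.symm i (Finset.mem_univ i)

variable [IsDomain R]

theorem det_ne_zero_of_mul_transpose_eq (hAB : A * Bᵀ = of (fun _ _ => 1) + k • 1)
    (hk : k ≠ 0) (hnk : (Fintype.card ι : R) + k ≠ 0) : A.det ≠ 0 := by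
  have h := congrArg det (of_one_add_smul_one_mul (ι := ι) k)
  rw [← hAB, Matrix.mul_assoc, det_mul, det_smul, det_one, mul_one] at h
  exact left_ne_zero_of_mul (h ▸ pow_ne_zero _ (mul_ne_zero hk hnk))

theorem eq_zero_of_mul_eq_zero_of_det_ne_zero {X : Matrix ι ι R} (hA : A.det ≠ 0)
    (h : A * X = 0) : X = 0 := by
  have := congrArg (adjugate A * ·) h
  simp only [← Matrix.mul_assoc, adjugate_mul, smul_mul, one_mul, mul_zero] at this
  exact (smul_eq_zero.mp this).resolve_left hA

theorem smul_transpose_mul_sub_eq_vecMulVec (hAB : A * Bᵀ = of (fun _ _ => 1) + k • 1)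
    (hk : k ≠ 0) (hnk : (Fintype.card ι : R) + k ≠ 0) :
    ((Fintype.card ι : R) + k) • (Bᵀ * A - k • 1) = vecMulVec (Bᵀ *ᵥ 1) (Aᵀ *ᵥ 1) := by
  rw [← sub_eq_zero]
  refine eq_zero_of_mul_eq_zero_of_det_ne_zero (det_ne_zero_of_mul_transpose_eq hAB hk hnk) ?_
  have hJA : (of fun _ _ => 1 : Matrix ι ι R) * A = vecMulVec 1 (Aᵀ *ᵥ 1) := by
    ext; simp [mul_apply, vecMulVec, mulVec, dotProduct]
  rw [mul_sub, Matrix.mul_smul, mul_sub, ← Matrix.mul_assoc, hAB, mul_vecMulVec, mulVec_mulVec,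
    hAB, of_one_add_smul_one_mulVec_one, add_mul, hJA]
  simp

omit [DecidableEq ι] in
theorem sum_row_eq_of_mulVec_eq {M : Matrix ι ι R} {u v : ι → R} {m : R} (hm : m ≠ 0)
    (huv : ∀ i j, u i * v j = m) (hM : M *ᵥ u = m • 1) (i j : ι) : ∑ l, M i l = v j := by
  have hu : ∀ l, u l = u j := fun l =>
    eq_of_forall_mul_eq hm (fun a b => mul_comm (v a) _ ▸ huv b a) l j
  have hrow := congrFun hM i
  simp only [mulVec, dotProduct, hu, ← Finset.sum_mul, Pi.smul_apply, Pi.one_apply,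
    smul_eq_mul, mul_one] at hrow
  exact mul_right_cancel₀ (left_ne_zero_of_mul (huv j j ▸ hm))
    (hrow.trans (mul_comm (u j) _ ▸ huv j j).symm)

end CommRing

section Int

variable {A B : Matrix ι ι ℤ} {k : ℤ}

theorem colSums_mul_colSums_eq (hA : ∀ i j, 0 ≤ A i j) (hB : ∀ i j, 0 ≤ B i j)
    (hAB : A * Bᵀ = of (fun _ _ => 1) + k • 1) (hk : k ≠ 0)
    (hnk : (Fintype.card ι : ℤ) + k ≠ 0) (i j : ι) :
    (Bᵀ *ᵥ 1) i * (Aᵀ *ᵥ 1) j = Fintype.card ι + k := by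
  have hkey := smul_transpose_mul_sub_eq_vecMulVec hAB hk hnk
  have hsum : ∑ l, (Bᵀ *ᵥ 1) l * (Aᵀ *ᵥ 1) l = Fintype.card ι * (Fintype.card ι + k) := by
    have htrace := congrArg trace hkey
    rw [trace_vecMulVec, trace_smul, trace_sub, trace_mul_comm, hAB] at htrace
    rw [← dotProduct, ← htrace, trace_add, trace_smul, trace_one, add_sub_cancel_right]
    simp [trace, mul_comm]
  exact Int.mul_eq_of_dvd_of_sum_diag_eq
    (transpose_mulVec_one_pos_of_nonneg_of_det_ne_zero hB
      (det_ne_zero_of_mul_transpose_eq (mul_transpose_eq_symm hAB) hk hnk))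
    (transpose_mulVec_one_pos_of_nonneg_of_det_ne_zero hA
      (det_ne_zero_of_mul_transpose_eq hAB hk hnk))
    (fun i j => ⟨_, (congrFun (congrFun hkey i) j).symm⟩) hsum i j

theorem transpose_mul_eq_of_mul_transpose_eq (hA : ∀ i j, 0 ≤ A i j) (hB : ∀ i j, 0 ≤ B i j)
    (hAB : A * Bᵀ = of (fun _ _ => 1) + k • 1) (hk : k ≠ 0)
    (hnk : (Fintype.card ι : ℤ) + k ≠ 0) : Bᵀ * A = of (fun _ _ => 1) + k • 1 := by
  have hkey := smul_transpose_mul_sub_eq_vecMulVec hAB hk hnk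
  have hconst : vecMulVec (Bᵀ *ᵥ 1) (Aᵀ *ᵥ 1) = ((Fintype.card ι : ℤ) + k) • of fun _ _ => 1 := by
    ext i j
    simp [vecMulVec_apply, colSums_mul_colSums_eq hA hB hAB hk hnk i j]
  rw [hconst] at hkey
  exact sub_eq_iff_eq_add.mp (smul_right_injective _ hnk hkey)

end Int

end Matrix

/-- Bridges–Ryser: a Lehman pair consists of regular matrices with rs = n + k,
and the products commute. -/
theorem stmt0 {n : ℕ} (hn : 1 < n) (A B : Matrix (Fin n) (Fin n) ℤ)
    (hA : is01 A) (hB : is01 B) (k : ℤ) (hk : k = -1 ∨ 1 ≤ k)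
    (hAB : A * Bᵀ = Matrix.of (fun _ _ => (1 : ℤ)) + k • 1) :
    Bᵀ * A = A * Bᵀ ∧
    ∃ r s : ℤ, (∀ i, ∑ j, A i j = r) ∧ (∀ j, ∑ i, A i j = r) ∧
      (∀ i, ∑ j, B i j = s) ∧ (∀ j, ∑ i, B i j = s) ∧ r * s = n + k := by
  have hk0 : k ≠ 0 := by omega
  have hnk : (n : ℤ) + k ≠ 0 := by omega
  have hnk' : (Fintype.card (Fin n) : ℤ) + k ≠ 0 := by rwa [Fintype.card_fin]
  have hA' : ∀ i j, 0 ≤ A i j := fun i j => by rcases hA i j with h | h <;> simp [h]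
  have hB' : ∀ i j, 0 ≤ B i j := fun i j => by rcases hB i j with h | h <;> simp [h]
  have hcd : ∀ i j, (Bᵀ *ᵥ 1) i * (Aᵀ *ᵥ 1) j = n + k := by
    simpa using colSums_mul_colSums_eq hA' hB' hAB hk0 hnk'
  have hdc : ∀ i j, (Aᵀ *ᵥ 1) i * (Bᵀ *ᵥ 1) j = n + k := fun i j =>
    mul_comm ((Bᵀ *ᵥ 1) j) _ ▸ hcd j i
  have hcolA : ∀ j, ∑ i, A i j = (Aᵀ *ᵥ 1) j := by simp [mulVec, dotProduct]
  have hcolB : ∀ j, ∑ i, B i j = (Bᵀ *ᵥ 1) j := by simp [mulVec, dotProduct]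
  let i₀ : Fin n := ⟨0, by omega⟩
  refine ⟨by rw [transpose_mul_eq_of_mul_transpose_eq hA' hB' hAB hk0 hnk', hAB],
    (Aᵀ *ᵥ 1) i₀, (Bᵀ *ᵥ 1) i₀, fun i => ?_, fun j => ?_, fun i => ?_, fun j => ?_, hdc i₀ i₀⟩
  · refine sum_row_eq_of_mulVec_eq hnk hcd ?_ i i₀
    rw [mulVec_mulVec, hAB, of_one_add_smul_one_mulVec_one, Fintype.card_fin]
  · exact (hcolA j).trans (eq_of_forall_mul_eq hnk hcd j i₀)
  · refine sum_row_eq_of_mulVec_eq hnk hdc ?_ i i₀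
    rw [mulVec_mulVec, mul_transpose_eq_symm hAB, of_one_add_smul_one_mulVec_one,
      Fintype.card_fin]
  · exact (hcolB j).trans (eq_of_forall_mul_eq hnk hdc j i₀)
end

section
/- If (A,B) is a Lehman pair of n×n (0,1)-matrices with AB^T = J + kI, then the Hadamard product A∘B is a (k+1)-regular (0,1)-matrix: every row and every column of A∘B sums to k+1. -/
open Matrix Finset

namespace Matrix

variable {ι : Type*} [Fintype ι] [DecidableEq ι]

section Field

variable {K : Type*} [Field K]

theorem vecMulVec_one_one_add_smul_one_mul_eq_one {k : K} (hk : k ≠ 0)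
    (hnk : (Fintype.card ι : K) + k ≠ 0) :
    (vecMulVec 1 1 + k • 1 : Matrix ι ι K) *
      (k⁻¹ • (1 - ((Fintype.card ι : K) + k)⁻¹ • vecMulVec 1 1)) = 1 := by
  have hJJ : (vecMulVec 1 1 : Matrix ι ι K) * vecMulVec 1 1 =
      (Fintype.card ι : K) • vecMulVec 1 1 := by
    rw [vecMulVec_mul_vecMulVec, ← smul_vecMulVec]
    simp [dotProduct]
  rw [Matrix.mul_smul, mul_sub, mul_one, Matrix.mul_smul, add_mul, hJJ, smul_mul, one_mul,
    ← add_smul, smul_smul, inv_mul_cancel₀ hnk, one_smul, add_sub_cancel_left, smul_smul,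
    inv_mul_cancel₀ hk, one_smul]

theorem mul_eq_smul_one_add_vecMulVec_of_mul_eq {A C : Matrix ι ι K} {k : K} (hk : k ≠ 0)
    (hnk : (Fintype.card ι : K) + k ≠ 0) (hAC : A * C = vecMulVec 1 1 + k • 1) :
    C * A = k • 1 + vecMulVec (((Fintype.card ι : K) + k)⁻¹ • C *ᵥ 1) (1 ᵥ* A) := by
  set M : Matrix ι ι K := vecMulVec 1 1 + k • 1
  obtain ⟨N, hNM⟩ : ∃ N, N * M = 1 :=
    ⟨_, mul_eq_one_comm.mp (vecMulVec_one_one_add_smul_one_mul_eq_one hk hnk)⟩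
  have hCNA : C * N * A = 1 :=
    mul_eq_one_comm.mp (by rw [← mul_assoc, hAC, mul_eq_one_comm, hNM])
  have hM1 : M *ᵥ (((Fintype.card ι : K) + k)⁻¹ • 1) = 1 := by
    ext i
    simp only [M, mulVec, dotProduct, add_apply, smul_apply, vecMulVec_apply, one_apply,
      Pi.smul_apply, Pi.one_apply, smul_eq_mul, add_mul, sum_add_distrib, mul_one, one_mul,
      sum_const, card_univ, nsmul_eq_mul, mul_ite, mul_zero, ite_mul, zero_mul, sum_ite_eq,
      mem_univ, ↓reduceIte]
    rw [← add_mul, mul_inv_cancel₀ hnk]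
  have hN1 : N *ᵥ 1 = ((Fintype.card ι : K) + k)⁻¹ • 1 := by
    conv_lhs => rw [← hM1, mulVec_mulVec, hNM, one_mulVec]
  calc C * A = C * N * (M * A) := by rw [mul_assoc C, ← mul_assoc N, hNM, one_mul]
    _ = _ := by
      rw [add_mul, vecMulVec_mul, smul_mul, one_mul, mul_add, Matrix.mul_smul, hCNA,
        mul_vecMulVec, ← mulVec_mulVec, hN1, mulVec_smul, add_comm]

end Field

theorem mul_apply_le_sum_mul_sum {l m n R : Type*} [Fintype m] [Semiring R] [PartialOrder R]
    [IsOrderedRing R] {C : Matrix l m R} {A : Matrix m n R} (hC : ∀ i j, 0 ≤ C i j)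
    (hA : ∀ i j, 0 ≤ A i j) (i : l) (j : n) :
    (C * A) i j ≤ (∑ r, C i r) * ∑ r, A r j := by
  rw [mul_apply, sum_mul]
  exact sum_le_sum fun r _ => mul_le_mul_of_nonneg_left
    (single_le_sum (fun s _ => hA s j) (mem_univ r)) (hC i r)

theorem card_add_mul_mul_apply_self_sub_eq {A C : Matrix ι ι ℤ} {k : ℤ} (hk : k ≠ 0)
    (hnk : (Fintype.card ι : ℤ) + k ≠ 0) (hAC : A * C = of (fun _ _ => 1) + k • 1) (i : ι) :
    ((Fintype.card ι : ℤ) + k) * ((C * A) i i - k) = (∑ r, C i r) * ∑ r, A r i := by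
  have hACℚ : A.map (Int.castRingHom ℚ) * C.map (Int.castRingHom ℚ) =
      vecMulVec 1 1 + (k : ℚ) • 1 := by
    rw [← Matrix.map_mul, hAC]
    ext r s
    simp only [map_apply, add_apply, smul_apply, of_apply, one_apply, vecMulVec_apply,
      Pi.one_apply]
    split_ifs <;> simp
  have h := congr_fun₂ (mul_eq_smul_one_add_vecMulVec_of_mul_eq (by exact_mod_cast hk)
    (by exact_mod_cast hnk) hACℚ) i i
  rw [← Matrix.map_mul] at h
  simp only [Int.coe_castRingHom, map_apply, smul_vecMulVec, add_apply, smul_apply,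
    one_apply_eq, smul_eq_mul, mul_one, vecMulVec_apply, mulVec, dotProduct, Pi.one_apply, vecMul,
    one_mul] at h
  have hne : ((Fintype.card ι : ℚ) + k) ≠ 0 := by exact_mod_cast hnk
  exact_mod_cast (show ((Fintype.card ι : ℚ) + k) * (((C * A) i i : ℚ) - k) =
    (∑ r, (C i r : ℚ)) * ∑ r, (A r i : ℚ) by rw [h]; field_simp; ring)

theorem mul_apply_self_eq_add_one_of_mul_eq {A C : Matrix ι ι ℤ} (hA : ∀ i j, 0 ≤ A i j)
    (hC : ∀ i j, 0 ≤ C i j) {k : ℤ} (hk : k ≠ 0) (hnk : 0 < (Fintype.card ι : ℤ) + k)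
    (hAC : A * C = of (fun _ _ => 1) + k • 1) (i : ι) : (C * A) i i = k + 1 := by
  have hge : ∀ i, k + 1 ≤ (C * A) i i := by
    intro i
    have hfac := card_add_mul_mul_apply_self_sub_eq hk hnk.ne' hAC i
    have hle := mul_apply_le_sum_mul_sum hC hA i i
    have hnn : 0 ≤ (C * A) i i := sum_nonneg fun r _ => mul_nonneg (hC i r) (hA r i)
    have h0 : 0 ≤ (C * A) i i - k := (mul_nonneg_iff_of_pos_left hnk).mp (by linarith)
    have h1 : (C * A) i i - k ≠ 0 := fun h => hk (by rw [h, mul_zero] at hfac; linarith)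
    omega
  have htr : ∑ i, (C * A) i i = ∑ _i : ι, (k + 1) := by
    have htrace := trace_mul_comm C A
    rw [hAC, trace_add, trace_smul, trace_one] at htrace
    simp only [trace, diag_apply, of_apply, sum_const, card_univ, Int.nsmul_eq_mul, mul_one,
      Int.zsmul_eq_mul] at htrace ⊢
    linarith
  exact ((sum_eq_sum_iff_of_le fun i _ => hge i).mp htr.symm i (mem_univ i)).symm

end Matrix

theorem is01.nonneg {m n : Type*} {A : Matrix m n ℤ} (hA : is01 A) (i : m) (j : n) :
    0 ≤ A i j := by
  rcases hA i j with h | h <;> simp [h]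

theorem is01.hadamard {m n : Type*} {A B : Matrix m n ℤ} (hA : is01 A) (hB : is01 B) :
    is01 (A ⊙ B) := fun i j => by
  rcases hA i j with h | h <;> simp [h, hB i j]

/-- For a Lehman pair (A,B), the Hadamard product A∘B is a (k+1)-regular (0,1)-matrix. -/
theorem stmt5 {n : ℕ} (A B : Matrix (Fin n) (Fin n) ℤ)
    (hA : is01 A) (hB : is01 B) (k : ℤ) (hk : k = -1 ∨ 1 ≤ k)
    (hAB : A * Bᵀ = Matrix.of (fun _ _ => (1 : ℤ)) + k • 1) :
    is01 (Matrix.hadamard A B) ∧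
    (∀ i, ∑ j, Matrix.hadamard A B i j = k + 1) ∧
    (∀ j, ∑ i, Matrix.hadamard A B i j = k + 1) := by
  have hrow : ∀ i, ∑ j, (A ⊙ B) i j = k + 1 := fun i => by
    have h := congr_fun₂ hAB i i
    rw [Matrix.add_apply, Matrix.smul_apply, one_apply_eq, of_apply, smul_eq_mul, mul_one,
      add_comm] at h
    simpa [mul_apply, hadamard_apply] using h
  have hcol : ∀ j, ∑ i, (A ⊙ B) i j = (Bᵀ * A) j j := fun j => by
    simp [mul_apply, hadamard_apply, mul_comm]
  refine ⟨hA.hadamard hB, hrow, fun j => ?_⟩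
  rcases hk with rfl | hk
  · have hzero : ∀ i j, (A ⊙ B) i j = 0 := fun i j =>
      (sum_eq_zero_iff_of_nonneg fun j _ => (hA.hadamard hB).nonneg i j).mp
        (by simpa using hrow i) j (mem_univ j)
    rw [sum_eq_zero fun i _ => hzero i j, neg_add_cancel]
  · rw [hcol]
    exact mul_apply_self_eq_add_one_of_mul_eq hA.nonneg (fun i j => hB.nonneg j i)
      (by omega) (by rw [Fintype.card_fin]; omega) hAB j
end

section
/- Let G be an r-regular Lehman graph with k=1 and r ≥ 3, with vertex set partitioned into copies of K_{r-1,r-1}. Then the compressed graph c(G,P), obtained by identifying all black vertices of each block to a single black vertex and all white vertices of each block to a single white vertex (with b_X adjacent to w_Y iff X = Y or some black vertex of X is adjacent to some white vertex of Y), is an r-regular bipartite graph. -/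
open Matrix BigOperators

/-!
Every black vertex `b` has its `r - 1` block mates as neighbours and hence exactly one further
neighbour `f b`, outside its block. So the compressed neighbourhood of `X` is `X` together with the
blocks of the `f b`, `b ∈ X`, and it suffices that these `r - 1` blocks are distinct. Reading
`A Bᵀ = J + I` along rows, two vertices of `X` whose outside neighbours lie in a common block `Y`
force the column of `B` at such a neighbour `w` to vanish on the black vertices of `Y`. But
`Bᵀ A = J + I` also holds (Lehman's commutation), and its `(w, w)` entry is the sum of that column
over `Y` plus a single entry of `B`, which cannot reach `2`. Columns are handled by transposing.
-/

open Finset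

theorem Set.ncard_setOf_eq_card_filter {α : Type*} [Fintype α] (p : α → Prop) [DecidablePred p] :
    {a | p a}.ncard = #{a | p a} := by
  rw [Set.ncard_eq_toFinset_card', Set.toFinset_ofPred]

theorem Finset.sum_eq_card_filter_eq_one {α : Type*} {a : α → ℤ} (ha : ∀ x, a x = 0 ∨ a x = 1)
    (s : Finset α) : ∑ x ∈ s, a x = #{x ∈ s | a x = 1} := by
  rw [← sum_boole]
  exact sum_congr rfl fun x _ => by rcases ha x with h | h <;> simp [h]

theorem Finset.exists_eq_one_iff_of_sum_eq_one {α : Type*} {a : α → ℤ}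
    (ha : ∀ x, a x = 0 ∨ a x = 1) {s : Finset α} (hs : ∑ x ∈ s, a x = 1) :
    ∃ x₀, ∀ x, x ∈ s ∧ a x = 1 ↔ x = x₀ := by
  rw [sum_eq_card_filter_eq_one ha] at hs
  obtain ⟨x₀, h⟩ := card_eq_one.mp (by exact_mod_cast hs)
  exact ⟨x₀, fun x => by simpa using Finset.ext_iff.mp h x⟩

section Blocks

variable {α ι : Type*} [Fintype α] [DecidableEq ι] {a : α → ℤ} {β : α → ι} {X : ι}

theorem exists_outside_iff_of_sum_eq (ha : ∀ x, a x = 0 ∨ a x = 1) {r : ℕ} (hr : 1 ≤ r)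
    (hsum : ∑ x, a x = r) (hcard : #{x | β x = X} = r - 1) (hX : ∀ x, β x = X → a x = 1) :
    ∃ x₀, ∀ x, β x ≠ X ∧ a x = 1 ↔ x = x₀ := by
  have hin : ∑ x with β x = X, a x = r - 1 := by
    rw [sum_congr rfl fun x hx => hX x (mem_filter.mp hx).2, sum_const, hcard]
    simp [Nat.cast_sub hr]
  have hout : ∑ x with β x ≠ X, a x = 1 := by
    have := sum_filter_add_sum_filter_not univ (fun x => β x = X) a
    linarith
  simpa using exists_eq_one_iff_of_sum_eq_one ha hout

theorem sum_mul_eq_sum_block_add (ha : ∀ x, a x = 0 ∨ a x = 1) (hX : ∀ x, β x = X → a x = 1)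
    {x₀ : α} (hx₀ : ∀ x, β x ≠ X ∧ a x = 1 ↔ x = x₀) (c : α → ℤ) :
    ∑ x, a x * c x = ∑ x with β x = X, c x + c x₀ := by
  rw [← sum_filter_add_sum_filter_not univ (fun x => β x = X)]
  congr 1
  · exact sum_congr rfl fun x hx => by rw [hX x (mem_filter.mp hx).2, one_mul]
  · obtain ⟨hx₀X, hax₀⟩ := (hx₀ x₀).mpr rfl
    rw [sum_eq_single_of_mem x₀ (by simpa using hx₀X), hax₀, one_mul]
    intro x hx hne
    rcases ha x with h | h
    · rw [h, zero_mul]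
    · exact absurd ((hx₀ x).mp ⟨(mem_filter.mp hx).2, h⟩) hne

end Blocks

namespace Matrix

/-- `J + I` is invertible (with inverse `I - J / (n + 1)`), so `A` has the two-sided inverse
`D = C (J + I)⁻¹`; since `A` commutes with `J`, `C A = D (J + I) A = D A (J + I) = J + I`. -/
theorem mul_eq_allOnes_add_one_of_mul_eq {K V W : Type*} [Field K] [CharZero K] [Fintype V]
    [Fintype W] [DecidableEq V] [DecidableEq W] (e : V ≃ W) {A : Matrix V W K} {C : Matrix W V K}
    (hJA : (of fun _ _ => 1 : Matrix V V K) * A = A * (of fun _ _ => 1 : Matrix W W K))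
    (hAC : A * C = of (fun _ _ => (1 : K)) + 1) : C * A = of (fun _ _ => (1 : K)) + 1 := by
  set J : Matrix V V K := of fun _ _ => 1
  set c : K := (Fintype.card V : K) + 1
  have hc : c ≠ 0 := Nat.cast_add_one_ne_zero _
  have hJJ : (J + 1) * J = c • J := by
    ext
    simp [J, c, mul_apply, sum_add_distrib, one_apply]
  have hinv : (J + 1) * (1 - c⁻¹ • J) = 1 := by
    rw [Matrix.mul_sub, Matrix.mul_one, Matrix.mul_smul, hJJ, smul_smul, inv_mul_cancel₀ hc,
      one_smul, add_sub_cancel_left]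
  set D := C * (1 - c⁻¹ • J)
  have hDA : D * A = 1 := (mul_eq_one_comm_of_equiv e).mp (by rw [← Matrix.mul_assoc, hAC, hinv])
  have hC : C = D * (J + 1) := by rw [← hAC, ← Matrix.mul_assoc, hDA, Matrix.one_mul]
  rw [hC, Matrix.mul_assoc, Matrix.add_mul, Matrix.one_mul, Matrix.mul_add, hJA,
    ← Matrix.mul_assoc, hDA, Matrix.one_mul]

theorem map_allOnes_add_one {n R S : Type*} [Fintype n] [DecidableEq n] [NonAssocSemiring R]
    [NonAssocSemiring S] (f : R →+* S) :
    ((of fun _ _ => 1 : Matrix n n R) + 1).map f = of (fun _ _ => 1) + 1 := by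
  rw [← RingHom.mapMatrix_apply, map_add, map_one]
  congr
  ext
  simp

theorem transpose_allOnes_add_one {n R : Type*} [DecidableEq n] [AddMonoidWithOne R] :
    ((of fun _ _ => 1 : Matrix n n R) + 1)ᵀ = of (fun _ _ => 1) + 1 := by
  rw [transpose_add, transpose_one]
  rfl

theorem card_eq_card_of_sum_eq {V W : Type*} [Fintype V] [Fintype W] {A : Matrix V W ℤ} {r : ℕ}
    (hr : r ≠ 0) (hrow : ∀ b, ∑ w, A b w = r) (hcol : ∀ w, ∑ b, A b w = r) :
    Fintype.card V = Fintype.card W := by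
  have h : (Fintype.card V : ℤ) * r = Fintype.card W * r := by
    calc _ = ∑ b, ∑ w, A b w := by simp [hrow]
      _ = ∑ w, ∑ b, A b w := sum_comm
      _ = _ := by simp [hcol]
  exact_mod_cast mul_right_cancel₀ (by exact_mod_cast hr) h

theorem transpose_mul_eq_of_mul_transpose_eq_s8 {V W : Type*} [Fintype V] [Fintype W] [DecidableEq V]
    [DecidableEq W] {A B : Matrix V W ℤ} {r : ℕ} (hr : r ≠ 0) (hrow : ∀ b, ∑ w, A b w = r)
    (hcol : ∀ w, ∑ b, A b w = r) (hAB : A * Bᵀ = of (fun _ _ => (1 : ℤ)) + 1) :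
    Bᵀ * A = of (fun _ _ => (1 : ℤ)) + 1 := by
  let φ := Int.castRingHom ℚ
  have hJA : (of fun _ _ => 1 : Matrix V V ℚ) * A.map φ =
      A.map φ * (of fun _ _ => 1 : Matrix W W ℚ) := by
    ext b w
    simp [mul_apply, φ, ← Int.cast_sum, hrow, hcol]
  have hφ := mul_eq_allOnes_add_one_of_mul_eq
    (Fintype.equivOfCardEq (card_eq_card_of_sum_eq hr hrow hcol)) hJA
    (by rw [← Matrix.map_mul, hAB, map_allOnes_add_one])
  refine map_injective (f := φ) Int.cast_injective ?_
  simp only [Matrix.map_mul, hφ, map_allOnes_add_one]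

end Matrix

section Compression

variable {V W ι : Type*} [Fintype W] [DecidableEq V] [DecidableEq ι]
  {B : Matrix V W ℤ} {βb : V → ι} {βw : W → ι} {f : V → W}

theorem eq_of_block_eq_of_outside_eq
    (hrowB : ∀ b b', ∑ w with βw w = βb b, B b' w + B b' (f b) = 1 + if b = b' then 1 else 0)
    {b₁ b₂ : V} (hβ : βb b₁ = βb b₂) (hf : f b₁ = f b₂) : b₁ = b₂ := by
  have h := hrowB b₁ b₂
  rw [hβ, hf, hrowB b₂ b₂] at h
  by_contra hne
  simp [hne] at h

theorem eq_zero_of_outside_block_eq [DecidableEq W] (hB : is01 B) (hout : ∀ b, βw (f b) ≠ βb b)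
    (hrowB : ∀ b b', ∑ w with βw w = βb b, B b' w + B b' (f b) = 1 + if b = b' then 1 else 0)
    (hpair : ∀ b, ∃ b', βb b' = βb b ∧ b' ≠ b)
    {b₁ b₂ : V} (hβ : βb b₁ = βb b₂) (hne : f b₁ ≠ f b₂) (hY : βw (f b₁) = βw (f b₂))
    {b : V} (hb : βb b = βw (f b₁)) : B b (f b₁) = 0 := by
  have hB₀ : ∀ b w, 0 ≤ B b w := fun b w => by rcases hB b w with h | h <;> simp [h]
  have hb₁ : b₁ ≠ b := by rintro rfl; exact hout b₁ hb.symm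
  have hb₂ : b₂ ≠ b := by rintro rfl; exact hout b₁ (hβ.trans hb).symm
  obtain ⟨b', hb', hb'b⟩ := hpair b
  -- `h₁, h₂` give `B b (f b₁) = B b (f b₂)`, while `h₃` bounds by `1` the sum of `B b` over the
  -- block of `f b₁`, which contains both `f b₁` and `f b₂`
  have h₁ := hrowB b₁ b
  have h₂ := hrowB b₂ b
  have h₃ := hrowB b' b
  rw [if_neg hb₁] at h₁
  rw [if_neg hb₂, ← hβ] at h₂
  rw [if_neg hb'b, hb', hb] at h₃
  have hpairsum : B b (f b₁) + B b (f b₂) ≤ ∑ w with βw w = βw (f b₁), B b w := by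
    rw [← sum_pair hne]
    exact sum_le_sum_of_subset_of_nonneg (by simp [insert_subset_iff, hY])
      fun w _ _ => hB₀ b w
  have := hB₀ b (f b')
  rcases hB b (f b₁) with h | h <;> linarith

theorem injOn_outside_block [Fintype V] [DecidableEq W] (hB : is01 B)
    (hout : ∀ b, βw (f b) ≠ βb b)
    (hrowB : ∀ b b', ∑ w with βw w = βb b, B b' w + B b' (f b) = 1 + if b = b' then 1 else 0)
    (hpair : ∀ b, ∃ b', βb b' = βb b ∧ b' ≠ b) {g : W → V}
    (hdiagB : ∀ w, ∑ b with βb b = βw w, B b w + B (g w) w = 2) (X : ι) :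
    Set.InjOn (fun b => βw (f b)) {b | βb b = X} := by
  intro b₁ hb₁ b₂ hb₂ hY
  by_contra hne
  have hf : f b₁ ≠ f b₂ := fun h =>
    hne (eq_of_block_eq_of_outside_eq hrowB (hb₁.trans hb₂.symm) h)
  have h := hdiagB (f b₁)
  rw [sum_eq_zero fun b hb => eq_zero_of_outside_block_eq hB hout hrowB hpair
    (hb₁.trans hb₂.symm) hf hY (mem_filter.mp hb).2, zero_add] at h
  rcases hB (g (f b₁)) (f b₁) with h' | h' <;> simp [h'] at h

end Compression

theorem ncard_compressed_adj_of_injOn {V W ι : Type*} [Finite V] {A : Matrix V W ℤ}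
    {βb : V → ι} {βw : W → ι} {f : V → W} (hf : ∀ b w, βw w ≠ βb b ∧ A b w = 1 ↔ w = f b)
    {r : ℕ} (hr : 1 ≤ r) (hblack : ∀ X, ({b | βb b = X} : Set V).ncard = r - 1) (X : ι)
    (hinj : Set.InjOn (fun b => βw (f b)) {b | βb b = X}) :
    ({Y | X = Y ∨ ∃ b w, βb b = X ∧ βw w = Y ∧ A b w = 1} : Set ι).ncard = r := by
  have hset : {Y | X = Y ∨ ∃ b w, βb b = X ∧ βw w = Y ∧ A b w = 1} =
      insert X ((fun b => βw (f b)) '' {b | βb b = X}) := by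
    ext Y
    simp only [Set.mem_ofPred_eq, Set.mem_insert_iff, Set.mem_image]
    constructor
    · rintro (rfl | ⟨b, w, rfl, rfl, hbw⟩)
      · exact Or.inl rfl
      · by_cases hw : βw w = βb b
        · exact Or.inl hw
        · exact Or.inr ⟨b, rfl, by rw [(hf b w).mp ⟨hw, hbw⟩]⟩
    · rintro (rfl | ⟨b, rfl, rfl⟩)
      · exact Or.inl rfl
      · exact Or.inr ⟨b, f b, rfl, rfl, ((hf b (f b)).mpr rfl).2⟩
  have hX : X ∉ (fun b => βw (f b)) '' {b | βb b = X} := by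
    rintro ⟨b, rfl, hb⟩
    exact ((hf b (f b)).mpr rfl).1 hb
  rw [hset, Set.ncard_insert_of_notMem hX (Set.toFinite _), hinj.ncard_image, hblack]
  omega

theorem ncard_compressed_adj {V W ι : Type*} [Fintype V] [Fintype W] [DecidableEq V]
    [DecidableEq W] [DecidableEq ι] {A B : Matrix V W ℤ} (hA : is01 A) (hB : is01 B) {r : ℕ}
    (hr : 3 ≤ r) (hrow : ∀ b, ∑ w, A b w = r) (hcol : ∀ w, ∑ b, A b w = r)
    (hAB : A * Bᵀ = of (fun _ _ => (1 : ℤ)) + 1) (hBA : Bᵀ * A = of (fun _ _ => (1 : ℤ)) + 1)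
    {βb : V → ι} {βw : W → ι} (hblack : ∀ X, ({b | βb b = X} : Set V).ncard = r - 1)
    (hwhite : ∀ X, ({w | βw w = X} : Set W).ncard = r - 1)
    (hcomplete : ∀ b w, βb b = βw w → A b w = 1) (X : ι) :
    ({Y | X = Y ∨ ∃ b w, βb b = X ∧ βw w = Y ∧ A b w = 1} : Set ι).ncard = r := by
  have hblackCard : ∀ X, #{b | βb b = X} = r - 1 := fun X => by
    rw [← Set.ncard_setOf_eq_card_filter, hblack]
  have hwhiteCard : ∀ X, #{w | βw w = X} = r - 1 := fun X => by
    rw [← Set.ncard_setOf_eq_card_filter, hwhite]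
  choose f hf using fun b => exists_outside_iff_of_sum_eq (hA b) (by omega) (hrow b)
    (hwhiteCard (βb b)) fun w hw => hcomplete b w hw.symm
  choose g hg using fun w => exists_outside_iff_of_sum_eq (fun b => hA b w) (by omega) (hcol w)
    (hblackCard (βw w)) fun b hb => hcomplete b w hb
  have hrowB : ∀ b b', ∑ w with βw w = βb b, B b' w + B b' (f b) =
      1 + if b = b' then 1 else 0 := by
    intro b b'
    rw [← sum_mul_eq_sum_block_add (hA b) (fun w hw => hcomplete b w hw.symm) (hf b)]
    simpa [mul_apply, one_apply] using congrFun (congrFun hAB b) b'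
  have hdiagB : ∀ w, ∑ b with βb b = βw w, B b w + B (g w) w = 2 := by
    intro w
    rw [← sum_mul_eq_sum_block_add (fun b => hA b w) (fun b hb => hcomplete b w hb) (hg w)]
    simpa [mul_apply, mul_comm, one_add_one_eq_two] using congrFun (congrFun hBA w) w
  have hpair : ∀ b, ∃ b', βb b' = βb b ∧ b' ≠ b := by
    intro b
    obtain ⟨b', hb', hne⟩ := exists_mem_ne (s := {b' | βb b' = βb b})
      (by rw [hblackCard (βb b)]; omega) b
    exact ⟨b', (mem_filter.mp hb').2, hne⟩
  exact ncard_compressed_adj_of_injOn hf (by omega) hblack X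
    (injOn_outside_block hB (fun b => ((hf b (f b)).mpr rfl).1) hrowB hpair hdiagB X)

theorem stmt8_general {V W ι : Type*} [Fintype V] [Fintype W]
    [DecidableEq V] [DecidableEq W] [DecidableEq ι]
    (A : Matrix V W ℤ) (hA : is01 A) (r : ℕ) (hr : 3 ≤ r)
    (hrow : ∀ b, ∑ w, A b w = r) (hcol : ∀ w, ∑ b, A b w = r)
    (B : Matrix V W ℤ) (hB : is01 B)
    (hAB : A * Bᵀ = Matrix.of (fun _ _ => (1 : ℤ)) + 1)
    (βb : V → ι) (βw : W → ι)
    (hblack : ∀ i, ({b | βb b = i} : Set V).ncard = r - 1)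
    (hwhite : ∀ i, ({w | βw w = i} : Set W).ncard = r - 1)
    (hcomplete : ∀ b w, βb b = βw w → A b w = 1)
    -- the adjacency relation of the compressed graph c(G,P)
    (Adj' : ι → ι → Prop)
    (hAdj' : ∀ X Y, Adj' X Y ↔ (X = Y ∨ ∃ b w, βb b = X ∧ βw w = Y ∧ A b w = 1)) :
    (∀ X, ({Y | Adj' X Y} : Set ι).ncard = r) ∧
    (∀ Y, ({X | Adj' X Y} : Set ι).ncard = r) := by
  have hBA := transpose_mul_eq_of_mul_transpose_eq_s8 (by omega) hrow hcol hAB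
  refine ⟨fun X => ?_, fun Y => ?_⟩
  · simpa only [hAdj'] using
      ncard_compressed_adj hA hB hr hrow hcol hAB hBA hblack hwhite hcomplete X
  · have hAB' : Aᵀ * Bᵀᵀ = of (fun _ _ => (1 : ℤ)) + 1 := by
      rw [transpose_transpose, ← transpose_allOnes_add_one, ← hBA, transpose_mul,
        transpose_transpose]
    have hBA' : Bᵀᵀ * Aᵀ = of (fun _ _ => (1 : ℤ)) + 1 := by
      rw [transpose_transpose, ← transpose_allOnes_add_one, ← hAB, transpose_mul,
        transpose_transpose]
    have hset : {X | Adj' X Y} = {X | Y = X ∨ ∃ w b, βw w = Y ∧ βb b = X ∧ Aᵀ w b = 1} :=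
      Set.ext fun X => (hAdj' X Y).trans <| or_congr eq_comm
        ⟨fun ⟨b, w, hb, hw, h⟩ => ⟨w, b, hw, hb, h⟩, fun ⟨w, b, hw, hb, h⟩ => ⟨b, w, hb, hw, h⟩⟩
    rw [hset]
    exact ncard_compressed_adj (fun w b => hA b w) (fun w b => hB b w) hr hcol hrow hAB' hBA'
      hwhite hblack (fun w b h => hcomplete b w h.symm) Y

/-- Compressing each biclique of a partition of an r-regular Lehman graph with k = 1
to an edge yields an r-regular bipartite graph. -/
theorem stmt8 {V W ι : Type*} [Fintype V] [Fintype W] [Fintype ι]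
    [DecidableEq V] [DecidableEq W] [DecidableEq ι]
    (A : Matrix V W ℤ) (hA : is01 A) (r : ℕ) (hr : 3 ≤ r)
    (hrow : ∀ b, ∑ w, A b w = r) (hcol : ∀ w, ∑ b, A b w = r)
    (B : Matrix V W ℤ) (hB : is01 B)
    (hAB : A * Bᵀ = Matrix.of (fun _ _ => (1 : ℤ)) + 1)
    (βb : V → ι) (βw : W → ι)
    (hblack : ∀ i, ({b | βb b = i} : Set V).ncard = r - 1)
    (hwhite : ∀ i, ({w | βw w = i} : Set W).ncard = r - 1)
    (hcomplete : ∀ b w, βb b = βw w → A b w = 1)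
    -- the adjacency relation of the compressed graph c(G,P)
    (Adj' : ι → ι → Prop)
    (hAdj' : ∀ X Y, Adj' X Y ↔ (X = Y ∨ ∃ b w, βb b = X ∧ βw w = Y ∧ A b w = 1)) :
    (∀ X, ({Y | Adj' X Y} : Set ι).ncard = r) ∧
    (∀ Y, ({X | Adj' X Y} : Set ι).ncard = r) :=
  stmt8_general A hA r hr hrow hcol B hB hAB βb βw hblack hwhite hcomplete Adj' hAdj'
end

section
/- Suppose G is a Lehman graph of type (n,3,s) with k = 3s - n ∈ {1,-1}, where s > 2 if k = 1 and s > 1 if k = -1. If G contains a 3-rung ladder segment L with attachment vertices b_L, w_L, b_R, w_R, then these four attachment vertices are pairwise distinct, w_L is not adjacent to b_R, and w_R is not adjacent to b_L. -/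
/-!
Over `ℚ`, `A Bᵀ = J + kI` with `k ≠ 0` and `n + k ≠ 0` makes `A` invertible, and since `A`
commutes with `J` (all its line sums are 3) also `Bᵀ A = J + kI`: the hypotheses are symmetric
under transposing both matrices, i.e. swapping the colours. Off the diagonal, `A Bᵀ = J + kI` says
that every row `b'` of `B` other than `b` has exactly one `1` on the neighbourhood `N(b)`. If
`N(b₁) = {p, q, x}`, `N(b₂) = {p, q, y}` and `N(b₃) = {t, y, x}`, then for every other `b` the
first two give `B b x = B b y`, and the third forces `B b t = 1`. So column `t` of `B` has at
least `n - 3` ones, i.e. `s ≥ n - 3`, which is impossible when `3s = n ± 1` with `s` as large as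
assumed. Both `w_L = w_R` and `b_R ~ w_L` produce such a triple of neighbourhoods in the ladder;
the other two claims are the same statements for the transposed graph.
-/

open Matrix BigOperators

open Finset

local notation "J" => Matrix.of fun _ _ => 1

namespace Finset

variable {α : Type*} [DecidableEq α]

theorem ne_of_card_eq_three {x y z : α} (h : #{x, y, z} = 3) :
    x ≠ y ∧ x ≠ z ∧ y ≠ z := by
  refine ⟨?_, ?_, ?_⟩ <;> rintro rfl
  · have := card_le_two (a := x) (b := z); simp_all
  · have := card_le_two (a := y) (b := x); simp_all
  · have := card_le_two (a := x) (b := y); simp_all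

theorem sum_triple_of_card_eq_three {β : Type*} [AddCommMonoid β] {x y z : α}
    (h : #{x, y, z} = 3) (f : α → β) : ∑ i ∈ {x, y, z}, f i = f x + f y + f z := by
  obtain ⟨hxy, hxz, hyz⟩ := ne_of_card_eq_three h
  simp [sum_insert, hxy, hxz, hyz, add_assoc]

theorem eq_triple_of_card_eq_three {s : Finset α} (hs : #s = 3) {x y z : α} (hx : x ∈ s)
    (hy : y ∈ s) (hz : z ∈ s) (hxy : x ≠ y) (hxz : x ≠ z) (hyz : y ≠ z) : s = {x, y, z} :=
  (eq_of_subset_of_card_le (by simp [insert_subset_iff, hx, hy, hz])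
    (by rw [hs, card_eq_three.mpr ⟨x, y, z, hxy, hxz, hyz, rfl⟩])).symm

theorem exists_eq_triple_of_card_eq_three {s : Finset α} (hs : #s = 3) {x y : α} (hx : x ∈ s)
    (hy : y ∈ s) (hxy : x ≠ y) : ∃ z, s = {z, x, y} := by
  have hy' : y ∈ s.erase x := mem_erase.mpr ⟨hxy.symm, hy⟩
  obtain ⟨z, hz⟩ := card_eq_one.mp (show #((s.erase x).erase y) = 1 by
    rw [card_erase_of_mem hy', card_erase_of_mem hx, hs])
  refine ⟨z, ?_⟩
  rw [← insert_erase hx, ← insert_erase hy', hz]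
  ext; simp only [mem_insert, mem_singleton]; tauto

theorem card_le_sum_add_card {ι : Type*} [Fintype ι] [DecidableEq ι] {g : ι → ℤ}
    (hg : ∀ i, 0 ≤ g i) {S : Finset ι} (h : ∀ i ∉ S, g i = 1) :
    (Fintype.card ι : ℤ) ≤ ∑ i, g i + #S := by
  have hcompl : ∑ i ∈ Sᶜ, g i = #Sᶜ := by
    rw [sum_congr rfl fun i hi => h i (mem_compl.mp hi), sum_const, nsmul_one]
  have := card_add_card_compl S
  have := sum_le_univ_sum_of_nonneg (s := Sᶜ) hg
  omega

end Finset

namespace Matrix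

theorem map_allOnes_add_smul_one {m R S : Type*} [DecidableEq m] [Ring R] [Ring S] (f : R →+* S)
    (k : R) : (J + k • 1 : Matrix m m R).map f = J + f k • 1 := by
  ext i j; by_cases h : i = j <;> simp [h]

variable {V W : Type*} [Fintype V]

theorem allOnes_mul_allOnes {R : Type*} [NonAssocSemiring R] :
    (J : Matrix V V R) * (J : Matrix V W R) = (Fintype.card V : R) • J := by
  ext; simp [mul_apply]

variable [Fintype W]

theorem allOnes_mul_eq_mul_allOnes {R : Type*} [NonAssocSemiring R] {A : Matrix V W R} {r : R}
    (hrow : ∀ b, ∑ w, A b w = r) (hcol : ∀ w, ∑ b, A b w = r) :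
    (J : Matrix V V R) * A = A * (J : Matrix W W R) := by
  ext; simp [mul_apply, hrow, hcol]

variable [DecidableEq V]

theorem allOnes_add_smul_one_mul_inv {K : Type*} [Field K] {k : K} (hk : k ≠ 0)
    (hnk : (Fintype.card V : K) + k ≠ 0) :
    (J + k • 1 : Matrix V V K) * (k⁻¹ • (1 - ((Fintype.card V : K) + k)⁻¹ • J)) = 1 :=
    by
  rw [Matrix.mul_smul, mul_sub, mul_one, Matrix.mul_smul, add_mul, allOnes_mul_allOnes,
    Matrix.smul_mul, one_mul, ← add_smul, smul_smul, inv_mul_cancel₀ hnk, one_smul,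
    add_sub_cancel_left, smul_smul, inv_mul_cancel₀ hk, one_smul]

variable [DecidableEq W]

theorem transpose_mul_eq_of_mul_transpose_eq_s12 {K : Type*} [Field K] {A B : Matrix V W K}
    {k : K} (hcard : Fintype.card V = Fintype.card W) (hk : k ≠ 0)
    (hnk : (Fintype.card V : K) + k ≠ 0) (hJA : (J : Matrix V V K) * A = A * (J : Matrix W W K))
    (hAB : A * Bᵀ = J + k • 1) : Bᵀ * A = J + k • 1 := by
  set N : Matrix V V K := k⁻¹ • (1 - ((Fintype.card V : K) + k)⁻¹ • J)
  have hleft : Bᵀ * N * A = 1 := (mul_eq_one_comm_of_card_eq V W K hcard).mp <| by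
    rw [← Matrix.mul_assoc, hAB, allOnes_add_smul_one_mul_inv hk hnk]
  have hcomm : (J + k • 1 : Matrix V V K) * A = A * (J + k • 1 : Matrix W W K) := by
    rw [Matrix.add_mul, Matrix.mul_add, hJA, Matrix.smul_mul, Matrix.mul_smul, Matrix.one_mul,
      Matrix.mul_one]
  calc Bᵀ * A = Bᵀ * N * A * (Bᵀ * A) := by rw [hleft, one_mul]
    _ = Bᵀ * N * ((A * Bᵀ) * A) := by simp only [Matrix.mul_assoc]
    _ = Bᵀ * N * A * (J + k • 1 : Matrix W W K) := by
      rw [hAB, hcomm]; simp only [Matrix.mul_assoc]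
    _ = J + k • 1 := by rw [hleft, one_mul]

theorem transpose_mul_eq_of_mul_transpose_eq_int {A B : Matrix V W ℤ} {k : ℤ}
    (hcard : Fintype.card V = Fintype.card W) (hk : k ≠ 0)
    (hnk : (Fintype.card V : ℤ) + k ≠ 0)
    (hJA : (J : Matrix V V ℤ) * A = A * (J : Matrix W W ℤ))
    (hAB : A * Bᵀ = J + k • 1) : Bᵀ * A = J + k • 1 := by
  set f := Int.castRingHom ℚ
  have hJA' := congrArg (Matrix.map · f) hJA
  have hAB' := congrArg (Matrix.map · f) hAB
  simp only [Matrix.map_mul, map_allOnes_add_smul_one] at hJA' hAB'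
  rw [transpose_map] at hAB'
  have := transpose_mul_eq_of_mul_transpose_eq_s12 hcard (by simpa [f] using hk)
    (by simpa [f] using (Int.cast_ne_zero (α := ℚ)).mpr hnk) hJA' hAB'
  apply Matrix.map_injective (RingHom.injective_int f)
  simp only [Matrix.map_mul, map_allOnes_add_smul_one, transpose_map, this]

end Matrix

section RowSupport

variable {V W : Type*} [Fintype W]

def rowSupport (A : Matrix V W ℤ) (b : V) : Finset W := {w | A b w = 1}

variable {A : Matrix V W ℤ}

theorem sum_mul_eq_sum_rowSupport (hA : is01 A) (b : V) (c : W → ℤ) :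
    ∑ w, A b w * c w = ∑ w ∈ rowSupport A b, c w := by
  rw [rowSupport, sum_filter]
  refine sum_congr rfl fun w _ => ?_
  rcases hA b w with h | h <;> simp [h]

theorem card_rowSupport_eq (hA : is01 A) {b : V} {r : ℕ} (h : ∑ w, A b w = r) :
    #(rowSupport A b) = r := by
  have := sum_mul_eq_sum_rowSupport hA b 1
  simp only [mul_one, Pi.one_apply, sum_const, nsmul_one, h] at this
  exact_mod_cast this.symm

theorem rowSupport_eq_triple [DecidableEq W] (hA : is01 A) {b : V} (hrow : ∑ w, A b w = 3)
    {x y z : W} (hx : A b x = 1) (hy : A b y = 1) (hz : A b z = 1)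
    (hxy : x ≠ y) (hxz : x ≠ z) (hyz : y ≠ z) : rowSupport A b = {x, y, z} :=
  eq_triple_of_card_eq_three (card_rowSupport_eq hA hrow)
    (by simpa [rowSupport]) (by simpa [rowSupport]) (by simpa [rowSupport]) hxy hxz hyz

theorem sum_rowSupport_eq_one [DecidableEq V] (hA : is01 A) {B : Matrix V W ℤ} {k : ℤ}
    (hAB : A * Bᵀ = J + k • 1) {b b' : V} (hbb' : b ≠ b') :
    ∑ w ∈ rowSupport A b, B b' w = 1 := by
  have := congrFun (congrFun hAB b) b'
  simp only [mul_apply, transpose_apply, Matrix.add_apply, Matrix.smul_apply,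
    one_apply_ne hbb', of_apply, smul_zero, add_zero] at this
  rw [← sum_mul_eq_sum_rowSupport hA, this]

end RowSupport

section Lehman

variable {V W : Type*} [Fintype W] [DecidableEq V] [DecidableEq W] {A B : Matrix V W ℤ}
  {k : ℤ}

theorem eq_one_of_rowSupport_eq_triples (hA : is01 A) (hArow : ∀ b, ∑ w, A b w = 3)
    (hB : is01 B) (hAB : A * Bᵀ = J + k • 1) {b₁ b₂ b₃ : V} {p q x y t : W}
    (h₁ : rowSupport A b₁ = {p, q, x}) (h₂ : rowSupport A b₂ = {p, q, y})
    (h₃ : rowSupport A b₃ = {t, y, x}) {b : V} (hb : b ∉ ({b₁, b₂, b₃} : Finset V)) :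
    B b t = 1 := by
  have hsum : ∀ {b' : V} {u v z : W}, rowSupport A b' = {u, v, z} → b' ≠ b →
      B b u + B b v + B b z = 1 := fun {b'} _ _ _ h hne => by
    rw [← sum_triple_of_card_eq_three (h ▸ card_rowSupport_eq hA (hArow b')), ← h,
      sum_rowSupport_eq_one hA hAB hne]
  simp only [mem_insert, mem_singleton, not_or] at hb
  have e₁ := hsum h₁ (Ne.symm hb.1)
  have e₂ := hsum h₂ (Ne.symm hb.2.1)
  have e₃ := hsum h₃ (Ne.symm hb.2.2)
  rcases hB b x with hx | hx <;> rcases hB b t with ht | ht <;> omega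

theorem not_rowSupport_eq_triples [Fintype V] {s : ℕ} (hA : is01 A)
    (hArow : ∀ b, ∑ w, A b w = 3) (hB : is01 B) (hBcol : ∀ w, ∑ b, B b w = s)
    (hAB : A * Bᵀ = J + k • 1) (hs : s + 3 < Fintype.card V) {b₁ b₂ b₃ : V}
    {p q x y t : W}
    (h₁ : rowSupport A b₁ = {p, q, x}) (h₂ : rowSupport A b₂ = {p, q, y})
    (h₃ : rowSupport A b₃ = {t, y, x}) : False := by
  have hcount := card_le_sum_add_card (g := fun b => B b t)
    (fun b => by rcases hB b t with h | h <;> simp [h])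
    (fun b hb => eq_one_of_rowSupport_eq_triples hA hArow hB hAB h₁ h₂ h₃ hb)
  have := card_le_three (a := b₁) (b := b₂) (c := b₃)
  rw [hBcol] at hcount
  omega

/-- The rows `r₀ r₁ r₂` and columns `c₀ c₁ c₂` form a 3-rung ladder, `cL` and `cR` are its
white attachment vertices and `rR` is any neighbour of `c₂`. -/
theorem ladder_attachment_ne_and_eq_zero [Fintype V] {s : ℕ} (hA : is01 A)
    (hArow : ∀ b, ∑ w, A b w = 3) (hB : is01 B) (hBcol : ∀ w, ∑ b, B b w = s)
    (hAB : A * Bᵀ = J + k • 1) (hs : s + 3 < Fintype.card V)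
    {r₀ r₁ r₂ rR : V} {c₀ c₁ c₂ cL cR : W} (h₀ : rowSupport A r₀ = {c₀, c₁, cL})
    (h₁ : rowSupport A r₁ = {c₀, c₁, c₂}) (h₂ : rowSupport A r₂ = {c₁, c₂, cR})
    (hcL : cL ≠ c₂) (hR : A rR c₂ = 1) : cL ≠ cR ∧ A rR cL = 0 := by
  refine ⟨?_, (hA rR cL).resolve_right fun hRL => ?_⟩
  · rintro rfl
    exact not_rowSupport_eq_triples hA hArow hB hBcol hAB hs h₀ h₁ h₂
  · obtain ⟨u, hu⟩ := exists_eq_triple_of_card_eq_three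
      (card_rowSupport_eq hA (hArow rR))
      (by simpa [rowSupport] : c₂ ∈ rowSupport A rR)
      (by simpa [rowSupport] : cL ∈ rowSupport A rR) hcL.symm
    exact not_rowSupport_eq_triples hA hArow hB hBcol hAB hs h₀ h₁ hu

end Lehman

theorem stmt12_general {V W : Type*} [Fintype V] [Fintype W] [DecidableEq V] [DecidableEq W]
    (n s : ℕ) (hcardV : Fintype.card V = n) (hcardW : Fintype.card W = n)
    (A : Matrix V W ℤ) (hA : is01 A)
    (hArow : ∀ b, ∑ w, A b w = 3) (hAcol : ∀ w, ∑ b, A b w = 3)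
    (B : Matrix V W ℤ) (hB : is01 B)
    (hBrow : ∀ b, ∑ w, B b w = s) (hBcol : ∀ w, ∑ b, B b w = s)
    (k : ℤ) (hk : k = 3 * s - n) (hk1 : k = 1 ∨ k = -1)
    (hs1 : k = 1 → 2 < s) (hs2 : k = -1 → 1 < s)
    (hAB : A * Bᵀ = Matrix.of (fun _ _ => (1 : ℤ)) + k • 1)
    -- the 3-rung ladder segment L
    (b₀ b₁ b₂ : V) (w₀ w₁ w₂ : W)
    (hb01 : b₀ ≠ b₁) (hb02 : b₀ ≠ b₂) (hb12 : b₁ ≠ b₂)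
    (hw01 : w₀ ≠ w₁) (hw02 : w₀ ≠ w₂) (hw12 : w₁ ≠ w₂)
    (h00 : A b₀ w₀ = 1) (h11 : A b₁ w₁ = 1) (h22 : A b₂ w₂ = 1)
    (h01 : A b₀ w₁ = 1) (h10 : A b₁ w₀ = 1) (h12 : A b₁ w₂ = 1) (h21 : A b₂ w₁ = 1)
    -- the attachment vertices
    (bL : V) (hbL : bL ∉ ({b₀, b₁, b₂} : Set V)) (hbLe : A bL w₀ = 1)
    (wL : W) (hwL : wL ∉ ({w₀, w₁, w₂} : Set W)) (hwLe : A b₀ wL = 1)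
    (bR : V) (hbR : bR ∉ ({b₀, b₁, b₂} : Set V)) (hbRe : A bR w₂ = 1)
    (wR : W) (hwR : wR ∉ ({w₀, w₁, w₂} : Set W)) (hwRe : A b₂ wR = 1) :
    bL ≠ bR ∧ wL ≠ wR ∧ A bR wL = 0 ∧ A bL wR = 0 := by
  simp only [Set.mem_insert_iff, Set.mem_singleton_iff, not_or] at hbL hwL hbR hwR
  have hn : s + 3 < n := by omega
  have hBA : Bᵀ * A = J + k • 1 :=
    transpose_mul_eq_of_mul_transpose_eq_int (hcardV.trans hcardW.symm) (by omega) (by omega)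
      (allOnes_mul_eq_mul_allOnes hArow hAcol) hAB
  have hAt : is01 Aᵀ := fun w b => hA b w
  have hABt : Aᵀ * Bᵀᵀ = J + k • 1 := by
    rw [← transpose_mul, hBA, transpose_add, transpose_smul, transpose_one]; rfl
  obtain ⟨hwLR, hbRwL⟩ := ladder_attachment_ne_and_eq_zero hA hArow hB hBcol hAB (hcardV ▸ hn)
    (rowSupport_eq_triple hA (hArow b₀) h00 h01 hwLe hw01 (Ne.symm hwL.1) (Ne.symm hwL.2.1))
    (rowSupport_eq_triple hA (hArow b₁) h10 h11 h12 hw01 hw02 hw12)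
    (rowSupport_eq_triple hA (hArow b₂) h21 h22 hwRe hw12 (Ne.symm hwR.2.1) (Ne.symm hwR.2.2))
    hwL.2.2 hbRe
  obtain ⟨hbLR, hbLwR⟩ := ladder_attachment_ne_and_eq_zero hAt hAcol (fun w b => hB b w) hBrow
    hABt (hcardW ▸ hn)
    (rowSupport_eq_triple hAt (hAcol w₀) h00 h10 hbLe hb01 (Ne.symm hbL.1) (Ne.symm hbL.2.1))
    (rowSupport_eq_triple hAt (hAcol w₁) h01 h11 h21 hb01 hb02 hb12)
    (rowSupport_eq_triple hAt (hAcol w₂) h12 h22 hbRe hb12 (Ne.symm hbR.2.1) (Ne.symm hbR.2.2))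
    hbL.2.2 hwRe
  exact ⟨hbLR, hwLR, hbRwL, hbLwR⟩

/-- In a Lehman graph of type (n,3,s) with k = 3s - n ∈ {1,-1} (s > 2 if k = 1, s > 1 if
k = -1), the attachment vertices of any 3-rung ladder segment are pairwise distinct and
the pairs (b_L, w_R), (b_R, w_L) are non-adjacent. -/
theorem stmt12 {V W : Type*} [Fintype V] [Fintype W] [DecidableEq V] [DecidableEq W]
    (n s : ℕ) (hcardV : Fintype.card V = n) (hcardW : Fintype.card W = n)
    (A : Matrix V W ℤ) (hA : is01 A)
    (hArow : ∀ b, ∑ w, A b w = 3) (hAcol : ∀ w, ∑ b, A b w = 3)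
    (B : Matrix V W ℤ) (hB : is01 B)
    (hBrow : ∀ b, ∑ w, B b w = s) (hBcol : ∀ w, ∑ b, B b w = s)
    (k : ℤ) (hk : k = 3 * s - n) (hk1 : k = 1 ∨ k = -1)
    (hs1 : k = 1 → 2 < s) (hs2 : k = -1 → 1 < s)
    (hAB : A * Bᵀ = Matrix.of (fun _ _ => (1 : ℤ)) + k • 1)
    -- the 3-rung ladder segment L
    (b₀ b₁ b₂ : V) (w₀ w₁ w₂ : W)
    (hb01 : b₀ ≠ b₁) (hb02 : b₀ ≠ b₂) (hb12 : b₁ ≠ b₂)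
    (hw01 : w₀ ≠ w₁) (hw02 : w₀ ≠ w₂) (hw12 : w₁ ≠ w₂)
    (h00 : A b₀ w₀ = 1) (h11 : A b₁ w₁ = 1) (h22 : A b₂ w₂ = 1)
    (h01 : A b₀ w₁ = 1) (h10 : A b₁ w₀ = 1) (h12 : A b₁ w₂ = 1) (h21 : A b₂ w₁ = 1)
    (h02 : A b₀ w₂ = 0) (h20 : A b₂ w₀ = 0)
    -- the attachment vertices
    (bL : V) (hbL : bL ∉ ({b₀, b₁, b₂} : Set V)) (hbLe : A bL w₀ = 1)
    (wL : W) (hwL : wL ∉ ({w₀, w₁, w₂} : Set W)) (hwLe : A b₀ wL = 1)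
    (bR : V) (hbR : bR ∉ ({b₀, b₁, b₂} : Set V)) (hbRe : A bR w₂ = 1)
    (wR : W) (hwR : wR ∉ ({w₀, w₁, w₂} : Set W)) (hwRe : A b₂ wR = 1) :
    bL ≠ bR ∧ wL ≠ wR ∧ A bR wL = 0 ∧ A bL wR = 0 :=
  stmt12_general n s hcardV hcardW A hA hArow hAcol B hB hBrow hBcol k hk hk1 hs1 hs2 hAB b₀ b₁ b₂
    w₀ w₁ w₂ hb01 hb02 hb12 hw01 hw02 hw12 h00 h11 h22 h01 h10 h12 h21 bL hbL hbLe wL hwL hwLe bR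
    hbR hbRe wR hwR hwRe
end

section
/- Let G be a (3s-1,3,s)-Lehman graph (so k=1) and let e = (w_L, b_R) and f = (w_R, b_L) be non-incident edges of G lying in the auxiliary graph (i.e. the corresponding entries of B are 1). If the mates of b_L and b_R are disjoint and the mates of w_L and w_R are disjoint, then the graph obtained by removing e and f, inserting a 3-rung ladder segment on new vertices b_0,b_1,b_2,w_0,w_1,w_2, and adding edges (b_L,w_0), (b_R,w_2), (b_0,w_L), (b_2,w_R) is a (3(s+1)-1, 3, s+1)-Lehman graph. -/
open Matrix BigOperators

private lemma sum_ind_mul {W : Type*} [Fintype W] [DecidableEq W] (c : W) (f : W → ℤ) :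
    ∑ w, (if w = c then (1:ℤ) else 0) * f w = f c := by
  simp [ite_mul]

/-- The expanded `B` matrix for the ladder insertion. -/
def Bnew {V W : Type*} (B : Matrix V W ℤ) (bL bR : V) (wL wR : W) :
    Matrix (V ⊕ Fin 3) (W ⊕ Fin 3) ℤ :=
  Matrix.of fun x y =>
    Sum.elim
      (fun b => Sum.elim (fun w => B b w)
        (fun j : Fin 3 => if j = 0 then B b wR else if j = 1 then 1 - B b wL - B b wR else B b wL) y)
      (fun i : Fin 3 => Sum.elim
        (fun w => if i = 0 then B bR w else if i = 1 then 1 - B bL w - B bR w else B bL w)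
        (fun j : Fin 3 => if (i = 0 ∧ j = 1) ∨ (i = 1 ∧ j = 0) ∨ (i = 1 ∧ j = 2) ∨ (i = 2 ∧ j = 1)
          then (1:ℤ) else 0) y) x

section BnewLemmas
variable {V W : Type*} (B : Matrix V W ℤ) (bL bR : V) (wL wR : W)

lemma Bnew_ll (b w) : Bnew B bL bR wL wR (Sum.inl b) (Sum.inl w) = B b w := rfl
lemma Bnew_l0 (b) : Bnew B bL bR wL wR (Sum.inl b) (Sum.inr 0) = B b wR := by simp [Bnew]
lemma Bnew_l1 (b) : Bnew B bL bR wL wR (Sum.inl b) (Sum.inr 1) = 1 - B b wL - B b wR := by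
  simp [Bnew]
lemma Bnew_l2 (b) : Bnew B bL bR wL wR (Sum.inl b) (Sum.inr 2) = B b wL := by simp [Bnew]
lemma Bnew_0l (w) : Bnew B bL bR wL wR (Sum.inr 0) (Sum.inl w) = B bR w := by simp [Bnew]
lemma Bnew_1l (w) : Bnew B bL bR wL wR (Sum.inr 1) (Sum.inl w) = 1 - B bL w - B bR w := by
  simp [Bnew]
lemma Bnew_2l (w) : Bnew B bL bR wL wR (Sum.inr 2) (Sum.inl w) = B bL w := by simp [Bnew]
lemma Bnew_rr (i j : Fin 3) : Bnew B bL bR wL wR (Sum.inr i) (Sum.inr j)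
    = if (i = 0 ∧ j = 1) ∨ (i = 1 ∧ j = 0) ∨ (i = 1 ∧ j = 2) ∨ (i = 2 ∧ j = 1)
      then (1:ℤ) else 0 := rfl

lemma Bnew_r00 : Bnew B bL bR wL wR (Sum.inr 0) (Sum.inr 0) = 0 := by simp [Bnew]
lemma Bnew_r01 : Bnew B bL bR wL wR (Sum.inr 0) (Sum.inr 1) = 1 := by simp [Bnew]
lemma Bnew_r02 : Bnew B bL bR wL wR (Sum.inr 0) (Sum.inr 2) = 0 := by simp [Bnew]
lemma Bnew_r10 : Bnew B bL bR wL wR (Sum.inr 1) (Sum.inr 0) = 1 := by simp [Bnew]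
lemma Bnew_r11 : Bnew B bL bR wL wR (Sum.inr 1) (Sum.inr 1) = 0 := by simp [Bnew]
lemma Bnew_r12 : Bnew B bL bR wL wR (Sum.inr 1) (Sum.inr 2) = 1 := by simp [Bnew]
lemma Bnew_r20 : Bnew B bL bR wL wR (Sum.inr 2) (Sum.inr 0) = 0 := by simp [Bnew]
lemma Bnew_r21 : Bnew B bL bR wL wR (Sum.inr 2) (Sum.inr 1) = 1 := by simp [Bnew]
lemma Bnew_r22 : Bnew B bL bR wL wR (Sum.inr 2) (Sum.inr 2) = 0 := by simp [Bnew]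

end BnewLemmas

/-- Inserting a 3-rung ladder segment into a (3s-1,3,s)-Lehman graph across a pair of
non-incident auxiliary edges with disjoint mates yields a (3(s+1)-1,3,s+1)-Lehman graph. -/
theorem stmt14 {V W : Type*} [Fintype V] [Fintype W] [DecidableEq V] [DecidableEq W]
    (s : ℕ) (hcardV : Fintype.card V = 3 * s - 1) (hcardW : Fintype.card W = 3 * s - 1)
    (A : Matrix V W ℤ) (hA : is01 A)
    (hArow : ∀ b, ∑ w, A b w = 3) (hAcol : ∀ w, ∑ b, A b w = 3)
    (B : Matrix V W ℤ) (hB : is01 B)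
    (hBrow : ∀ b, ∑ w, B b w = s) (hBcol : ∀ w, ∑ b, B b w = s)
    (hAB : A * Bᵀ = Matrix.of (fun _ _ => (1 : ℤ)) + 1)
    -- the edges e = (w_L, b_R) and f = (w_R, b_L), non-incident
    (bL bR : V) (wL wR : W) (hbLR : bL ≠ bR) (hwLR : wL ≠ wR)
    (he : A bR wL = 1) (hf : A bL wR = 1)
    -- e and f are in the auxiliary graph
    (heaux : B bR wL = 1) (hfaux : B bL wR = 1)
    -- the mates of b_L and b_R are disjoint, and the mates of w_L and w_R are disjoint
    (hmb : ∀ w, B bL w = 0 ∨ B bR w = 0)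
    (hmw : ∀ b, B b wL = 0 ∨ B b wR = 0)
    -- the expanded graph G↑{e,f}: remove e, f; add the ladder b₀b₁b₂/w₀w₁w₂ and the
    -- edges (b_L,w₀), (b_R,w₂), (b₀,w_L), (b₂,w_R)
    (A' : Matrix (V ⊕ Fin 3) (W ⊕ Fin 3) ℤ)
    (hA'1 : ∀ b w, A' (Sum.inl b) (Sum.inl w) =
      if (b = bL ∧ w = wR) ∨ (b = bR ∧ w = wL) then 0 else A b w)
    (hA'2 : ∀ b (j : Fin 3), A' (Sum.inl b) (Sum.inr j) =
      if (b = bL ∧ j = 0) ∨ (b = bR ∧ j = 2) then 1 else 0)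
    (hA'3 : ∀ (i : Fin 3) w, A' (Sum.inr i) (Sum.inl w) =
      if (i = 0 ∧ w = wL) ∨ (i = 2 ∧ w = wR) then 1 else 0)
    (hA'4 : ∀ i j : Fin 3, A' (Sum.inr i) (Sum.inr j) =
      if i = j ∨ (i = 0 ∧ j = 1) ∨ (i = 1 ∧ j = 0) ∨ (i = 1 ∧ j = 2) ∨ (i = 2 ∧ j = 1)
      then 1 else 0) :
    is01 A' ∧
    (∀ b, ∑ w, A' b w = 3) ∧ (∀ w, ∑ b, A' b w = 3) ∧
    Fintype.card (V ⊕ Fin 3) = 3 * (s + 1) - 1 ∧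
    ∃ B' : Matrix (V ⊕ Fin 3) (W ⊕ Fin 3) ℤ,
      is01 B' ∧
      (∀ b, ∑ w, B' b w = (s : ℤ) + 1) ∧ (∀ w, ∑ b, B' b w = (s : ℤ) + 1) ∧
      A' * B'ᵀ = Matrix.of (fun _ _ => (1 : ℤ)) + 1 := by
  have i3 : ∀ i : Fin 3, i = 0 ∨ i = 1 ∨ i = 2 := by decide
  have hRL : bR ≠ bL := hbLR.symm
  have hwRL : wR ≠ wL := hwLR.symm
  have hBLL : B bL wL = 0 := by
    rcases hmw bL with h | h
    · exact h
    · rw [hfaux] at h; exact absurd h one_ne_zero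
  have hBRR : B bR wR = 0 := by
    rcases hmw bR with h | h
    · rw [heaux] at h; exact absurd h one_ne_zero
    · exact h
  have hABe : ∀ b b', ∑ w, A b w * B b' w = 1 + (if b = b' then (1:ℤ) else 0) := by
    intro b b'
    have h := congrFun (congrFun hAB b) b'
    simp only [Matrix.mul_apply, Matrix.transpose_apply, Matrix.add_apply, Matrix.of_apply,
      Matrix.one_apply] at h
    exact h
  have hT : ∀ b, ∑ w, A b w * (1 - B bL w - B bR w)
      = 1 - (if b = bL then (1:ℤ) else 0) - (if b = bR then 1 else 0) := by
    intro b
    have h : ∀ w ∈ Finset.univ, A b w * (1 - B bL w - B bR w)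
        = A b w - (A b w * B bL w + A b w * B bR w) := fun w _ => by ring
    rw [Finset.sum_congr rfl h, Finset.sum_sub_distrib, Finset.sum_add_distrib, hArow,
      hABe, hABe]
    ring
  have hs : 1 ≤ s := by
    have : 0 < Fintype.card W := @Fintype.card_pos _ _ ⟨wL⟩
    omega
  have hAL : ∀ w, A' (Sum.inl bL) (Sum.inl w) = A bL w - (if w = wR then 1 else 0) := by
    intro w
    rw [hA'1]
    by_cases h : w = wR
    · subst h; simp [hf, hbLR]
    · simp [h, hbLR]
  have hAR : ∀ w, A' (Sum.inl bR) (Sum.inl w) = A bR w - (if w = wL then 1 else 0) := by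
    intro w
    rw [hA'1]
    by_cases h : w = wL
    · subst h; simp [he, hRL]
    · simp [h, hRL]
  have hAg : ∀ b, b ≠ bL → b ≠ bR → ∀ w, A' (Sum.inl b) (Sum.inl w) = A b w := by
    intro b h1 h2 w; rw [hA'1]; simp [h1, h2]
  have hAcL : ∀ b, A' (Sum.inl b) (Sum.inl wL) = A b wL - (if b = bR then 1 else 0) := by
    intro b
    rw [hA'1]
    by_cases h : b = bR
    · subst h; simp [he, hwRL.symm]
    · simp [h, hwRL.symm]
  have hAcR : ∀ b, A' (Sum.inl b) (Sum.inl wR) = A b wR - (if b = bL then 1 else 0) := by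
    intro b
    rw [hA'1]
    by_cases h : b = bL
    · subst h; simp [hf, hwRL]
    · simp [h, hwRL]
  have hAcg : ∀ w, w ≠ wL → w ≠ wR → ∀ b, A' (Sum.inl b) (Sum.inl w) = A b w := by
    intro w h1 h2 b; rw [hA'1]; simp [h1, h2]
  have hI0 : ∀ w, A' (Sum.inr 0) (Sum.inl w) = if w = wL then 1 else 0 := by
    intro w; rw [hA'3]; simp
  have hI1 : ∀ w, A' (Sum.inr 1) (Sum.inl w) = 0 := by
    intro w; rw [hA'3]; simp
  have hI2 : ∀ w, A' (Sum.inr 2) (Sum.inl w) = if w = wR then 1 else 0 := by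
    intro w; rw [hA'3]; simp
  have hcWZ : (Fintype.card W : ℤ) = 3 * (s:ℤ) - 1 := by omega
  have hcVZ : (Fintype.card V : ℤ) = 3 * (s:ℤ) - 1 := by omega
  have hcW : ∑ w : W, ((1:ℤ) - B bL w - B bR w) = (s:ℤ) - 1 := by
    rw [Finset.sum_sub_distrib, Finset.sum_sub_distrib, Finset.sum_const, hBrow, hBrow,
      Finset.card_univ]
    rw [nsmul_eq_mul, mul_one, hcWZ]
    ring
  have hcV : ∑ b : V, ((1:ℤ) - B b wL - B b wR) = (s:ℤ) - 1 := by
    rw [Finset.sum_sub_distrib, Finset.sum_sub_distrib, Finset.sum_const, hBcol, hBcol,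
      Finset.card_univ]
    rw [nsmul_eq_mul, mul_one, hcVZ]
    ring
  refine ⟨?_, ?_, ?_, ?_, ⟨Bnew B bL bR wL wR, ?_, ?_, ?_, ?_⟩⟩
  · -- is01 A'
    rintro (b | i) (w | j)
    · rw [hA'1]; split_ifs
      · exact Or.inl rfl
      · exact hA b w
    · rw [hA'2]; split_ifs <;> simp
    · rw [hA'3]; split_ifs <;> simp
    · rw [hA'4]; split_ifs <;> simp
  · -- row sums of A'
    rintro (b | i) <;> rw [Fintype.sum_sum_type]
    · by_cases hbl : b = bL
      · subst hbl
        simp_rw [hAL]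
        rw [Finset.sum_sub_distrib, hArow, Fin.sum_univ_three, hA'2, hA'2, hA'2]
        simp [hbLR, Finset.sum_ite_eq']
      · by_cases hbr : b = bR
        · subst hbr
          simp_rw [hAR]
          rw [Finset.sum_sub_distrib, hArow, Fin.sum_univ_three, hA'2, hA'2, hA'2]
          simp [hRL, Finset.sum_ite_eq']
        · simp_rw [hAg b hbl hbr]
          rw [hArow, Fin.sum_univ_three, hA'2, hA'2, hA'2]
          simp [hbl, hbr]
    · rcases i3 i with rfl | rfl | rfl
      · simp_rw [hI0]
        rw [Fin.sum_univ_three, hA'4, hA'4, hA'4]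
        simp [Finset.sum_ite_eq']
      · simp_rw [hI1]
        rw [Fin.sum_univ_three, hA'4, hA'4, hA'4]
        simp
      · simp_rw [hI2]
        rw [Fin.sum_univ_three, hA'4, hA'4, hA'4]
        simp [Finset.sum_ite_eq']
  · -- col sums of A'
    rintro (w | j) <;> rw [Fintype.sum_sum_type]
    · by_cases hwl : w = wL
      · subst hwl
        simp_rw [hAcL]
        rw [Finset.sum_sub_distrib, hAcol, Fin.sum_univ_three, hA'3, hA'3, hA'3]
        simp [hwLR, Finset.sum_ite_eq']
      · by_cases hwr : w = wR
        · subst hwr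
          simp_rw [hAcR]
          rw [Finset.sum_sub_distrib, hAcol, Fin.sum_univ_three, hA'3, hA'3, hA'3]
          simp [hwRL, Finset.sum_ite_eq']
        · simp_rw [hAcg w hwl hwr]
          rw [hAcol, Fin.sum_univ_three, hA'3, hA'3, hA'3]
          simp [hwl, hwr]
    · rcases i3 j with rfl | rfl | rfl
      · simp_rw [hA'2]
        rw [Fin.sum_univ_three, hA'4, hA'4, hA'4]
        simp [hbLR, Finset.sum_ite_eq']
      · simp_rw [hA'2]
        rw [Fin.sum_univ_three, hA'4, hA'4, hA'4]
        simp
      · simp_rw [hA'2]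
        rw [Fin.sum_univ_three, hA'4, hA'4, hA'4]
        simp [hRL, Finset.sum_ite_eq']
  · -- cardinality
    rw [Fintype.card_sum, hcardV]
    simp
    omega
  · -- is01 B'
    rintro (b | i) (w | j)
    · exact hB b w
    · rcases i3 j with rfl | rfl | rfl
      · rw [Bnew_l0]; exact hB b wR
      · rw [Bnew_l1]
        rcases hmw b with h | h <;> rcases hB b wL with h1 | h1 <;>
          rcases hB b wR with h2 | h2 <;> omega
      · rw [Bnew_l2]; exact hB b wL
    · rcases i3 i with rfl | rfl | rfl
      · rw [Bnew_0l]; exact hB bR w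
      · rw [Bnew_1l]
        rcases hmb w with h | h <;> rcases hB bL w with h1 | h1 <;>
          rcases hB bR w with h2 | h2 <;> omega
      · rw [Bnew_2l]; exact hB bL w
    · rw [Bnew_rr]; split_ifs <;> simp
  · -- row sums of B'
    rintro (b | i) <;> rw [Fintype.sum_sum_type, Fin.sum_univ_three]
    · simp_rw [Bnew_ll]
      rw [Bnew_l0, Bnew_l1, Bnew_l2, hBrow b]
      ring
    · rcases i3 i with rfl | rfl | rfl
      · simp_rw [Bnew_0l]
        rw [hBrow bR, Bnew_r00, Bnew_r01, Bnew_r02]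
        ring
      · simp_rw [Bnew_1l]
        rw [hcW, Bnew_r10, Bnew_r11, Bnew_r12]
        ring
      · simp_rw [Bnew_2l]
        rw [hBrow bL, Bnew_r20, Bnew_r21, Bnew_r22]
        ring
  · -- col sums of B'
    rintro (w | j) <;> rw [Fintype.sum_sum_type, Fin.sum_univ_three]
    · simp_rw [Bnew_ll]
      rw [Bnew_0l, Bnew_1l, Bnew_2l, hBcol w]
      ring
    · rcases i3 j with rfl | rfl | rfl
      · simp_rw [Bnew_l0]
        rw [hBcol wR, Bnew_r00, Bnew_r10, Bnew_r20]
        ring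
      · simp_rw [Bnew_l1]
        rw [hcV, Bnew_r01, Bnew_r11, Bnew_r21]
        ring
      · simp_rw [Bnew_l2]
        rw [hBcol wL, Bnew_r02, Bnew_r12, Bnew_r22]
        ring
  · -- the product identity
    have hWL : ∀ g : W → ℤ, ∑ w, A' (Sum.inl bL) (Sum.inl w) * g w
        = (∑ w, A bL w * g w) - g wR := by
      intro g
      simp_rw [hAL, sub_mul, Finset.sum_sub_distrib, sum_ind_mul]
    have hWR : ∀ g : W → ℤ, ∑ w, A' (Sum.inl bR) (Sum.inl w) * g w
        = (∑ w, A bR w * g w) - g wL := by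
      intro g
      simp_rw [hAR, sub_mul, Finset.sum_sub_distrib, sum_ind_mul]
    have key : ∀ x y, (∑ w, A' x (Sum.inl w) * Bnew B bL bR wL wR y (Sum.inl w))
        + (∑ j : Fin 3, A' x (Sum.inr j) * Bnew B bL bR wL wR y (Sum.inr j))
        = 1 + (if x = y then (1:ℤ) else 0) := by
      rintro (b | i) y
      · by_cases hbl : b = bL
        · rw [hbl]
          have hF : (∑ j : Fin 3, A' (Sum.inl bL) (Sum.inr j)
                * Bnew B bL bR wL wR y (Sum.inr j)) = Bnew B bL bR wL wR y (Sum.inr 0) := by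
            rw [Fin.sum_univ_three, hA'2, hA'2, hA'2]
            simp [hbLR]
          rw [hWL, hF]
          rcases y with b' | i'
          · simp_rw [Bnew_ll]
            rw [Bnew_l0, hABe]
            simp only [Sum.inl.injEq]
            ring
          · rcases i3 i' with rfl | rfl | rfl
            · simp_rw [Bnew_0l]
              rw [Bnew_r00, hABe]
              simp [hbLR, hBRR]
            · simp_rw [Bnew_1l]
              rw [Bnew_r10, hT]
              simp [hbLR, hfaux, hBRR]
            · simp_rw [Bnew_2l]
              rw [Bnew_r20, hABe]
              simp [hfaux]
        · by_cases hbr : b = bR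
          · rw [hbr]
            have hF : (∑ j : Fin 3, A' (Sum.inl bR) (Sum.inr j)
                  * Bnew B bL bR wL wR y (Sum.inr j)) = Bnew B bL bR wL wR y (Sum.inr 2) := by
              rw [Fin.sum_univ_three, hA'2, hA'2, hA'2]
              simp [hRL]
            rw [hWR, hF]
            rcases y with b' | i'
            · simp_rw [Bnew_ll]
              rw [Bnew_l2, hABe]
              simp only [Sum.inl.injEq]
              ring
            · rcases i3 i' with rfl | rfl | rfl
              · simp_rw [Bnew_0l]
                rw [Bnew_r02, hABe]
                simp [hRL, heaux]
              · simp_rw [Bnew_1l]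
                rw [Bnew_r12, hT]
                simp [hRL, heaux, hBLL]
              · simp_rw [Bnew_2l]
                rw [Bnew_r22, hABe]
                simp [hRL, hBLL]
          · have hF : (∑ j : Fin 3, A' (Sum.inl b) (Sum.inr j)
                  * Bnew B bL bR wL wR y (Sum.inr j)) = 0 := by
              rw [Fin.sum_univ_three, hA'2, hA'2, hA'2]
              simp [hbl, hbr]
            simp_rw [hAg b hbl hbr]
            rw [hF, add_zero]
            rcases y with b' | i'
            · simp_rw [Bnew_ll]
              rw [hABe]
              simp only [Sum.inl.injEq]
            · rcases i3 i' with rfl | rfl | rfl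
              · simp_rw [Bnew_0l]
                rw [hABe]
                simp [hbr]
              · simp_rw [Bnew_1l]
                rw [hT]
                simp [hbl, hbr]
              · simp_rw [Bnew_2l]
                rw [hABe]
                simp [hbl]
      · rcases i3 i with rfl | rfl | rfl
        · have hW : (∑ w, A' (Sum.inr 0) (Sum.inl w) * Bnew B bL bR wL wR y (Sum.inl w))
              = Bnew B bL bR wL wR y (Sum.inl wL) := by
            simp_rw [hI0]
            exact sum_ind_mul wL _
          have hF : (∑ j : Fin 3, A' (Sum.inr 0) (Sum.inr j) * Bnew B bL bR wL wR y (Sum.inr j))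
              = Bnew B bL bR wL wR y (Sum.inr 0) + Bnew B bL bR wL wR y (Sum.inr 1) := by
            rw [Fin.sum_univ_three, hA'4, hA'4, hA'4]
            simp
          rw [hW, hF]
          rcases y with b' | i'
          · rw [Bnew_ll, Bnew_l0, Bnew_l1]
            simp only [show (Sum.inr 0 : V ⊕ Fin 3) ≠ Sum.inl b' from by simp, if_neg]
            ring_nf
            simp
          · rcases i3 i' with rfl | rfl | rfl
            · rw [Bnew_0l, Bnew_r00, Bnew_r01]
              simp [heaux]
            · rw [Bnew_1l, Bnew_r10, Bnew_r11]
              simp [hBLL, heaux]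
            · rw [Bnew_2l, Bnew_r20, Bnew_r21]
              simp [hBLL]
        · have hW : (∑ w, A' (Sum.inr 1) (Sum.inl w) * Bnew B bL bR wL wR y (Sum.inl w))
              = 0 := by
            simp_rw [hI1, zero_mul]
            exact Finset.sum_const_zero
          have hF : (∑ j : Fin 3, A' (Sum.inr 1) (Sum.inr j) * Bnew B bL bR wL wR y (Sum.inr j))
              = Bnew B bL bR wL wR y (Sum.inr 0) + Bnew B bL bR wL wR y (Sum.inr 1)
                + Bnew B bL bR wL wR y (Sum.inr 2) := by
            rw [Fin.sum_univ_three, hA'4, hA'4, hA'4]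
            simp
          rw [hW, hF, zero_add]
          rcases y with b' | i'
          · rw [Bnew_l0, Bnew_l1, Bnew_l2]
            simp only [show (Sum.inr 1 : V ⊕ Fin 3) ≠ Sum.inl b' from by simp, if_neg]
            ring_nf
            simp
          · rcases i3 i' with rfl | rfl | rfl
            · rw [Bnew_r00, Bnew_r01, Bnew_r02]
              simp
            · rw [Bnew_r10, Bnew_r11, Bnew_r12]
              simp
            · rw [Bnew_r20, Bnew_r21, Bnew_r22]
              simp
        · have hW : (∑ w, A' (Sum.inr 2) (Sum.inl w) * Bnew B bL bR wL wR y (Sum.inl w))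
              = Bnew B bL bR wL wR y (Sum.inl wR) := by
            simp_rw [hI2]
            exact sum_ind_mul wR _
          have hF : (∑ j : Fin 3, A' (Sum.inr 2) (Sum.inr j) * Bnew B bL bR wL wR y (Sum.inr j))
              = Bnew B bL bR wL wR y (Sum.inr 1) + Bnew B bL bR wL wR y (Sum.inr 2) := by
            rw [Fin.sum_univ_three, hA'4, hA'4, hA'4]
            simp
          rw [hW, hF]
          rcases y with b' | i'
          · rw [Bnew_ll, Bnew_l1, Bnew_l2]
            simp only [show (Sum.inr 2 : V ⊕ Fin 3) ≠ Sum.inl b' from by simp, if_neg]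
            ring_nf
            simp
          · rcases i3 i' with rfl | rfl | rfl
            · rw [Bnew_0l, Bnew_r01, Bnew_r02]
              simp [hBRR]
            · rw [Bnew_1l, Bnew_r11, Bnew_r12]
              simp [hBRR, hfaux]
            · rw [Bnew_2l, Bnew_r21, Bnew_r22]
              simp [hfaux]
    ext x y
    rw [Matrix.mul_apply]
    simp only [Matrix.transpose_apply]
    rw [Fintype.sum_sum_type, key x y]
    simp [Matrix.one_apply]
end

section
/- The Fano plane PG(2,2) has no blocking set: every minimal transversal of the lines of the Fano plane contains a line. Consequently, any clutter on the 7 points of the Fano plane whose hyperedges all meet every line, contain no line properly, and form an antichain containing all 7 lines, consists exactly of the 7 lines. -/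
open Finset

/-- Key lemma: every transversal of the lines of the Fano plane contains a line. -/
theorem fano_transversal_contains_line {P : Type*} [Fintype P] [DecidableEq P]
    (hP : Fintype.card P = 7)
    (L : Finset (Finset P)) (hL7 : L.card = 7)
    (hsize : ∀ l ∈ L, l.card = 3)
    (hll : ∀ l ∈ L, ∀ l' ∈ L, l ≠ l' → (l ∩ l').card = 1)
    (hpp : ∀ p q : P, p ≠ q → ∃! l, l ∈ L ∧ p ∈ l ∧ q ∈ l)
    (S : Finset P) (hS : ∀ l ∈ L, (S ∩ l).Nonempty) :
    ∃ l ∈ L, l ⊆ S := by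
  -- each point lies on exactly 3 lines
  have pencil : ∀ p : P, (L.filter fun l => p ∈ l).card = 3 := by
    intro p
    have hdisj : ∀ l ∈ L.filter (fun l => p ∈ l), ∀ l' ∈ L.filter (fun l => p ∈ l),
        l ≠ l' → Disjoint (l.erase p) (l'.erase p) := by
      intro l hl l' hl' hne
      simp only [mem_filter] at hl hl'
      have h1 : (l ∩ l').card = 1 := hll l hl.1 l' hl'.1 hne
      obtain ⟨x, hx⟩ := Finset.card_eq_one.mp h1
      have hpx : p = x := by
        have : p ∈ l ∩ l' := mem_inter.mpr ⟨hl.2, hl'.2⟩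
        rw [hx] at this; exact mem_singleton.mp this
      rw [Finset.disjoint_left]
      intro q hq hq'
      have : q ∈ l ∩ l' := mem_inter.mpr ⟨(mem_erase.mp hq).2, (mem_erase.mp hq').2⟩
      rw [hx] at this
      exact (mem_erase.mp hq).1 (hpx ▸ mem_singleton.mp this)
    have hunion : ((L.filter fun l => p ∈ l).biUnion fun l => l.erase p)
        = Finset.univ.erase p := by
      ext q
      simp only [mem_biUnion, mem_filter, mem_erase, mem_univ, and_true]
      constructor
      · rintro ⟨l, ⟨_, _⟩, hq, _⟩
        exact hq
      · intro hq
        obtain ⟨l, ⟨hlL, hpl, hql⟩, _⟩ := hpp p q (Ne.symm hq)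
        exact ⟨l, ⟨hlL, hpl⟩, hq, hql⟩
    have hcard := Finset.card_biUnion hdisj
    rw [hunion, Finset.card_erase_of_mem (mem_univ p), Finset.card_univ, hP] at hcard
    have hsum : ∑ l ∈ L.filter (fun l => p ∈ l), (l.erase p).card
        = ∑ l ∈ L.filter (fun l => p ∈ l), 2 := by
      apply Finset.sum_congr rfl
      intro l hl
      simp only [mem_filter] at hl
      rw [Finset.card_erase_of_mem hl.2, hsize l hl.1]
    rw [hsum, Finset.sum_const, smul_eq_mul] at hcard
    omega
  -- unique line through two points, as a pencil intersection
  have pair : ∀ a b : P, a ≠ b → ∃ l ∈ L, a ∈ l ∧ b ∈ l ∧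
      (L.filter fun l => a ∈ l) ∩ (L.filter fun l => b ∈ l) = {l} := by
    intro a b hab
    obtain ⟨l, ⟨hlL, ha, hb⟩, huniq⟩ := hpp a b hab
    refine ⟨l, hlL, ha, hb, ?_⟩
    ext m
    simp only [mem_inter, mem_filter, mem_singleton]
    constructor
    · rintro ⟨⟨hm, ham⟩, ⟨_, hbm⟩⟩
      exact huniq m ⟨hm, ham, hbm⟩
    · rintro rfl
      exact ⟨⟨hlL, ha⟩, ⟨hlL, hb⟩⟩
  -- bound: any transversal containing no line has at least 4 points
  have bound : ∀ T : Finset P, (∀ l ∈ L, (T ∩ l).Nonempty) →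
      (∀ l ∈ L, ¬ l ⊆ T) → 4 ≤ T.card := by
    intro T hT hnol
    -- L is covered by the pencils of points of T
    have hcover : L ⊆ T.biUnion fun p => L.filter fun l => p ∈ l := by
      intro l hl
      obtain ⟨p, hp⟩ := hT l hl
      rw [mem_inter] at hp
      exact mem_biUnion.mpr ⟨p, hp.1, mem_filter.mpr ⟨hl, hp.2⟩⟩
    have h3 : 3 ≤ T.card := by
      have := Finset.card_le_card hcover
      have hle := Finset.card_biUnion_le (s := T) (t := fun p => L.filter fun l => p ∈ l)
      have hsum : ∑ p ∈ T, (L.filter fun l => p ∈ l).card = 3 * T.card := by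
        rw [Finset.sum_congr rfl (fun p _ => pencil p), Finset.sum_const, smul_eq_mul]
        ring
      rw [hsum] at hle
      omega
    rcases Nat.lt_or_ge T.card 4 with h4 | h4
    · -- T.card = 3 : derive a contradiction
      exfalso
      have hT3 : T.card = 3 := by omega
      obtain ⟨a, b, c, hab, hac, hbc, rfl⟩ := Finset.card_eq_three.mp hT3
      by_cases hcol : ∃ l ∈ L, a ∈ l ∧ b ∈ l ∧ c ∈ l
      · obtain ⟨l, hlL, ha, hb, hc⟩ := hcol
        have hsub : ({a, b, c} : Finset P) ⊆ l := by
          intro x hx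
          simp only [mem_insert, mem_singleton] at hx
          rcases hx with rfl | rfl | rfl <;> assumption
        have : ({a, b, c} : Finset P) = l :=
          Finset.eq_of_subset_of_card_le hsub (by rw [hsize l hlL, hT3])
        exact hnol l hlL (this ▸ Finset.Subset.refl _)
      · push_neg at hcol
        -- inclusion-exclusion on the three pencils
        set A := L.filter fun l => a ∈ l with hA
        set B := L.filter fun l => b ∈ l with hB
        set C := L.filter fun l => c ∈ l with hC
        obtain ⟨lab, hlabL, halab, hblab, hABeq⟩ := pair a b hab
        obtain ⟨lac, hlacL, halac, hclac, hACeq⟩ := pair a c hac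
        obtain ⟨lbc, hlbcL, hblbc, hclbc, hBCeq⟩ := pair b c hbc
        have hcard_AB : (A ∪ B).card = 5 := by
          have := Finset.card_union_add_card_inter A B
          rw [hABeq, pencil a, pencil b, Finset.card_singleton] at this
          omega
        have hACBC : lac ≠ lbc := by
          rintro rfl
          exact hcol lac hlacL halac hblbc hclac
        have hABC_int : (A ∪ B) ∩ C = {lac, lbc} := by
          rw [Finset.union_inter_distrib_right, hACeq, hBCeq]
          rfl
        have hcard_int : ((A ∪ B) ∩ C).card = 2 := by
          rw [hABC_int, Finset.card_insert_of_notMem (by simp [hACBC]),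
            Finset.card_singleton]
        have hcard_ABC : (A ∪ B ∪ C).card = 6 := by
          have := Finset.card_union_add_card_inter (A ∪ B) C
          rw [hcard_AB, hcard_int, pencil c] at this
          omega
        have hcov2 : L ⊆ A ∪ B ∪ C := by
          intro l hl
          obtain ⟨p, hp⟩ := hT l hl
          rw [mem_inter] at hp
          have hpabc := hp.1
          simp only [mem_insert, mem_singleton] at hpabc
          simp only [mem_union, hA, hB, hC, mem_filter]
          rcases hpabc with rfl | rfl | rfl
          · exact Or.inl (Or.inl ⟨hl, hp.2⟩)
          · exact Or.inl (Or.inr ⟨hl, hp.2⟩)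
          · exact Or.inr ⟨hl, hp.2⟩
        have := Finset.card_le_card hcov2
        rw [hL7, hcard_ABC] at this
        omega
    · exact h4
  -- main argument: S or its complement must contain a line
  by_contra h
  push_neg at h
  have hSc : ∀ l ∈ L, (Sᶜ ∩ l).Nonempty := by
    intro l hl
    obtain ⟨x, hxl, hxS⟩ := Finset.not_subset.mp (h l hl)
    exact ⟨x, mem_inter.mpr ⟨Finset.mem_compl.mpr hxS, hxl⟩⟩
  have hScnol : ∀ l ∈ L, ¬ l ⊆ Sᶜ := by
    intro l hl hsub
    obtain ⟨x, hx⟩ := hS l hl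
    rw [mem_inter] at hx
    exact Finset.mem_compl.mp (hsub hx.2) hx.1
  have h1 := bound S hS h
  have h2 := bound Sᶜ hSc hScnol
  have := Finset.card_add_card_compl S
  rw [hP] at this
  omega

/-- The Fano plane has no blocking set: every minimal transversal of the lines contains a
line; consequently any clutter on its points whose hyperedges meet every line, properly
contain no line, and form an antichain containing all 7 lines is exactly the set of lines. -/
theorem stmt19 {P : Type*} [Fintype P] [DecidableEq P] (hP : Fintype.card P = 7)
    (L : Finset (Finset P)) (hL7 : L.card = 7)
    (hsize : ∀ l ∈ L, l.card = 3)
    (hll : ∀ l ∈ L, ∀ l' ∈ L, l ≠ l' → (l ∩ l').card = 1)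
    (hpp : ∀ p q : P, p ≠ q → ∃! l, l ∈ L ∧ p ∈ l ∧ q ∈ l) :
    (∀ S : Finset P, (∀ l ∈ L, (S ∩ l).Nonempty) →
        (∀ S' ⊂ S, ∃ l ∈ L, S' ∩ l = ∅) → ∃ l ∈ L, l ⊆ S) ∧
    (∀ E : Finset (Finset P), IsAntichain (· ⊆ ·) (E : Set (Finset P)) →
        (∀ e ∈ E, ∀ l ∈ L, (e ∩ l).Nonempty) →
        (∀ e ∈ E, ∀ l ∈ L, ¬ l ⊂ e) → L ⊆ E → E = L) := by
  constructor
  · intro S hS _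
    exact fano_transversal_contains_line hP L hL7 hsize hll hpp S hS
  · intro E _ htrans hnoproper hLE
    apply Finset.Subset.antisymm _ hLE
    intro e he
    obtain ⟨l, hlL, hle⟩ :=
      fano_transversal_contains_line hP L hL7 hsize hll hpp e (htrans e he)
    have : l = e := by
      by_contra hne
      exact hnoproper e he l hlL (lt_of_le_of_ne hle hne)
    exact this ▸ hlL
end
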